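/- arXiv:math/9812043 — 6 statements merged into one kernel-verified Lean document; each statement's English description precedes it below -/
import Mathlib

section
/- The Airy transform 𝒜 = 𝓕⁻¹ ∘ M_h ∘ 𝓕⁻¹ is a unitary operator on L²(ℝ, ℂ), and it is an involution: 𝒜 ∘ 𝒜 is the identity (equivalently, 𝒜⁻¹ = 𝒜). -/
open MeasureTheory Complex Filter Set

noncomputable section

abbrev L2Space := Lp ℂ 2 (volume : Measure ℝ)

/-!
On Schwartz functions the unitary Fourier transform squares to the reflection `R u (x) = u (-x)`
(Fourier inversion, after rescaling Mathlib's `e^{-2πixt}` convention); Schwartz functions are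
dense in `L²`, so `𝓕 ∘ 𝓕 = R` on all of `L²`, and then also `𝓕⁻¹ ∘ 𝓕⁻¹ = R`. Since
`h(-t) h(t) = 1`, the multiplier satisfies `M_h R M_h = R`, whence
`𝒜² = 𝓕⁻¹ M_h 𝓕⁻² M_h 𝓕⁻¹ = 𝓕⁻¹ R 𝓕⁻¹ = 𝓕⁻⁴ = R² = 1`. As `|h| = 1`, `𝒜` is an isometry.
-/

namespace MeasureTheory.Lp

section Multiplier

variable {α 𝕜 E : Type*} [MeasurableSpace α] [NormedField 𝕜] [NormedAddCommGroup E]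
  [NormedSpace 𝕜 E] {p : ENNReal} {μ : Measure α}

theorem norm_eq_of_ae_eq_smul_of_norm_eq_one {φ : α → 𝕜} (hφ : ∀ᵐ x ∂μ, ‖φ x‖ = 1)
    {u v : Lp E p μ} (hv : v =ᵐ[μ] fun x => φ x • u x) : ‖v‖ = ‖u‖ := by
  rw [norm_def, norm_def, eLpNorm_congr_ae hv]
  congr 1
  refine eLpNorm_congr_norm_ae ?_
  filter_upwards [hφ] with x hx
  rw [norm_smul, hx, one_mul]

end Multiplier

section Reflection

variable {G 𝕜 E : Type*} [MeasurableSpace G] [InvolutiveNeg G] [MeasurableNeg G]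
  [NormedAddCommGroup E] {p : ENNReal} {μ : Measure G} [μ.IsNegInvariant]

variable (μ) in
def reflection : Lp E p μ →+ Lp E p μ :=
  compMeasurePreserving Neg.neg (Measure.measurePreserving_neg μ)

theorem coeFn_reflection (u : Lp E p μ) : reflection μ u =ᵐ[μ] fun x => u (-x) :=
  coeFn_compMeasurePreserving u _

theorem reflection_toLp_ae_eq {f : G → E} (hf : MemLp f p μ) :
    reflection μ (hf.toLp f) =ᵐ[μ] fun x => f (-x) :=
  (coeFn_reflection _).trans <|
    (Measure.measurePreserving_neg μ).quasiMeasurePreserving.ae_eq_comp hf.coeFn_toLp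

theorem reflection_reflection (u : Lp E p μ) : reflection μ (reflection μ u) = u := by
  rw [reflection, ← compMeasurePreserving_comp_apply]
  convert compMeasurePreserving_id_apply u
  exact neg_involutive.comp_self

theorem continuous_reflection [Fact (1 ≤ p)] : Continuous (reflection (E := E) (p := p) μ) :=
  (isometry_compMeasurePreserving _).continuous

theorem map_reflection_map_eq_reflection [NormedField 𝕜] [NormedSpace 𝕜 E] {φ : G → 𝕜}
    (hφ : ∀ x, φ x * φ (-x) = 1) {M : Lp E p μ → Lp E p μ}
    (hM : ∀ u, M u =ᵐ[μ] fun x => φ x • u x) (v : Lp E p μ) :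
    M (reflection μ (M v)) = reflection μ v := by
  have hMv_neg : (fun x => M v (-x)) =ᵐ[μ] fun x => φ (-x) • v (-x) :=
    (Measure.measurePreserving_neg μ).quasiMeasurePreserving.ae_eq_comp (hM v)
  refine ext ((hM _).trans ?_)
  filter_upwards [coeFn_reflection (M v), hMv_neg, coeFn_reflection v] with x h₁ h₂ h₃
  rw [h₁, h₂, h₃, smul_smul, hφ, one_smul]

end Reflection

end MeasureTheory.Lp

section Fourier

open scoped FourierTransform SchwartzMap

theorem Real.fourier_comp_div {E : Type*} [NormedAddCommGroup E] [NormedSpace ℂ E]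
    (φ : ℝ → E) {a : ℝ} (ha : a ≠ 0) (w : ℝ) :
    𝓕 (fun t => φ (t / a)) w = |a| • 𝓕 φ (a * w) := by
  have h : ∀ v : ℝ, 𝐞 (-(v * w)) • φ (v / a) = 𝐞 (-(v / a * (a * w))) • φ (v / a) := by
    intro v
    congr 3
    field_simp
  simp_rw [Real.fourier_real_eq, h]
  exact Measure.integral_comp_div (fun y => 𝐞 (-(y * (a * w))) • φ y) a

theorem Real.fourier_const_mul (c : ℂ) (f : ℝ → ℂ) (w : ℝ) :
    𝓕 (fun t => c * f t) w = c * 𝓕 f w := by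
  simp_rw [Real.fourier_real_eq, ← integral_const_mul, Circle.smul_def, smul_eq_mul]
  congr 1 with v
  ring

def unitaryFourierIntegral (g : ℝ → ℂ) (x : ℝ) : ℂ :=
  (((2 * Real.pi : ℝ) ^ (-(1 : ℝ) / 2) : ℝ) : ℂ) *
    ∫ t : ℝ, g t * Complex.exp (-Complex.I * (x : ℂ) * (t : ℂ))

theorem unitaryFourierIntegral_eq_fourier (g : ℝ → ℂ) :
    unitaryFourierIntegral g =
      fun x => (((2 * Real.pi : ℝ) ^ (-(1 : ℝ) / 2) : ℝ) : ℂ) * 𝓕 g (x / (2 * Real.pi)) := by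
  ext x
  rw [unitaryFourierIntegral, Real.fourier_real_eq_integral_exp_smul]
  congr 2 with t
  rw [smul_eq_mul, mul_comm]
  congr 2
  push_cast
  field_simp

theorem two_pi_rpow_neg_half_mul_self :
    (2 * Real.pi) ^ (-(1 : ℝ) / 2) * (2 * Real.pi) ^ (-(1 : ℝ) / 2) * (2 * Real.pi) = 1 := by
  rw [← Real.rpow_add Real.two_pi_pos]
  norm_num
  rw [Real.rpow_neg_one, inv_mul_cancel₀ Real.two_pi_pos.ne']

theorem unitaryFourierIntegral_unitaryFourierIntegral (f : ℝ → ℂ) :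
    unitaryFourierIntegral (unitaryFourierIntegral f) = 𝓕 (𝓕 f) := by
  have h2π : 2 * Real.pi ≠ 0 := Real.two_pi_pos.ne'
  ext x
  simp_rw [unitaryFourierIntegral_eq_fourier, Real.fourier_const_mul,
    Real.fourier_comp_div _ h2π, mul_div_cancel₀ _ h2π, abs_of_pos Real.two_pi_pos,
    Complex.real_smul, ← mul_assoc]
  rw [← Complex.ofReal_mul, ← Complex.ofReal_mul, two_pi_rpow_neg_half_mul_self,
    Complex.ofReal_one, one_mul]

namespace SchwartzMap

def unitaryFourier (f : 𝓢(ℝ, ℂ)) : 𝓢(ℝ, ℂ) :=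
  (((2 * Real.pi : ℝ) ^ (-(1 : ℝ) / 2) : ℝ) : ℂ) •
    compCLMOfContinuousLinearEquiv ℂ
      (ContinuousLinearEquiv.smulLeft (Units.mk0 (2 * Real.pi)⁻¹ (by positivity)))
      (𝓕 f)

theorem coe_unitaryFourier (f : 𝓢(ℝ, ℂ)) :
    ⇑(unitaryFourier f) = unitaryFourierIntegral f := by
  ext x
  simp only [unitaryFourier, smul_apply, compCLMOfContinuousLinearEquiv_apply,
    Function.comp_apply, ContinuousLinearEquiv.smulLeft_apply_apply, Units.smul_mk0,
    smul_eq_mul, unitaryFourierIntegral_eq_fourier, fourier_coe, div_eq_inv_mul]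

theorem unitaryFourierIntegral_unitaryFourierIntegral_eq_comp_neg (f : 𝓢(ℝ, ℂ)) :
    unitaryFourierIntegral (unitaryFourierIntegral f) = fun x => f (-x) := by
  ext x
  rw [unitaryFourierIntegral_unitaryFourierIntegral, ← neg_neg x,
    ← Real.fourierInv_eq_fourier_neg, neg_neg,
    f.continuous.fourierInv_fourier_eq f.integrable (𝓕 f).integrable]

end SchwartzMap

end Fourier

theorem norm_cexp_I_mul_cube_div_three (t : ℝ) : ‖cexp (I * (t : ℂ) ^ 3 / 3)‖ = 1 := by
  rw [mul_div_assoc, ← Complex.ofReal_pow, ← Complex.ofReal_ofNat, ← Complex.ofReal_div]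
  exact Complex.norm_exp_I_mul_ofReal _

theorem cexp_I_mul_cube_div_three_mul_neg (t : ℝ) :
    cexp (I * (t : ℂ) ^ 3 / 3) * cexp (I * ((-t : ℝ) : ℂ) ^ 3 / 3) = 1 := by
  rw [← Complex.exp_add, Complex.ofReal_neg]
  convert Complex.exp_zero using 2
  ring

open SchwartzMap

def ExtendsUnitaryFourierIntegral (T : L2Space → L2Space) : Prop :=
  ∀ (g : ℝ → ℂ) (_ : Integrable g (volume : Measure ℝ)) (hg2 : MemLp g 2 (volume : Measure ℝ)),
    (T (hg2.toLp g) : ℝ → ℂ) =ᵐ[volume] unitaryFourierIntegral g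

namespace ExtendsUnitaryFourierIntegral

variable {T : L2Space → L2Space}

theorem apply_toLp (hT : ExtendsUnitaryFourierIntegral T) (f : 𝓢(ℝ, ℂ)) :
    T (f.toLp 2) = f.unitaryFourier.toLp 2 := by
  refine Lp.ext ((hT f f.integrable (f.memLp 2)).trans ?_)
  rw [← coe_unitaryFourier]
  exact (f.unitaryFourier.coeFn_toLp 2).symm

theorem apply_apply (hT : ExtendsUnitaryFourierIntegral T) (hTc : Continuous T)
    (u : L2Space) : T (T u) = Lp.reflection volume u := by
  have hdense := denseRange_toLpCLM (F := ℂ) (p := 2) (μ := (volume : Measure ℝ))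
    ENNReal.ofNat_ne_top
  refine congrFun (hdense.equalizer (hTc.comp hTc) Lp.continuous_reflection
    (funext fun f => ?_)) u
  simp only [Function.comp_apply, toLpCLM_apply, hT.apply_toLp]
  refine Lp.ext ((f.unitaryFourier.unitaryFourier.coeFn_toLp 2).trans ?_)
  rw [coe_unitaryFourier, coe_unitaryFourier,
    unitaryFourierIntegral_unitaryFourierIntegral_eq_comp_neg]
  exact (Lp.reflection_toLp_ae_eq (f.memLp 2)).symm

end ExtendsUnitaryFourierIntegral

/-- The Airy transform `𝒜 = 𝓕⁻¹ ∘ M_h ∘ 𝓕⁻¹`, where `𝓕` is the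
Fourier–Plancherel transform on `L²(ℝ, ℂ)` (the unitary operator agreeing with
`g ↦ (2π)^{-1/2} ∫ g(t) e^{-ixt} dt` on integrable functions) and `M_h` is
multiplication by `h(t) = e^{it³/3}`, is a unitary operator on `L²(ℝ, ℂ)` and is an
involution: `𝒜 ∘ 𝒜 = I` (equivalently `𝒜⁻¹ = 𝒜`). -/
theorem airy_transform_unitary_involution
    (𝓕 : L2Space ≃ₗᵢ[ℂ] L2Space)
    (h𝓕 : ∀ (g : ℝ → ℂ) (_ : Integrable g (volume : Measure ℝ))
      (hg2 : MemLp g 2 (volume : Measure ℝ)),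
      (𝓕 (hg2.toLp g) : ℝ → ℂ) =ᵐ[volume]
        fun x : ℝ => (((2 * Real.pi : ℝ) ^ (-(1 : ℝ) / 2) : ℝ) : ℂ) *
          ∫ t : ℝ, g t * Complex.exp (-Complex.I * (x : ℂ) * (t : ℂ)))
    (Mh : L2Space →ₗ[ℂ] L2Space)
    (hMh : ∀ u : L2Space, (Mh u : ℝ → ℂ) =ᵐ[volume]
      fun t : ℝ => Complex.exp (Complex.I * (t : ℂ) ^ 3 / 3) * u t) :
    -- 𝒜 := 𝓕⁻¹ ∘ M_h ∘ 𝓕⁻¹ is a (linear) isometry ...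
    (∀ u : L2Space, ‖𝓕.symm (Mh (𝓕.symm u))‖ = ‖u‖) ∧
    -- ... which is bijective (hence unitary) ...
    Function.Bijective (fun u : L2Space => 𝓕.symm (Mh (𝓕.symm u))) ∧
    -- ... and an involution: 𝒜 (𝒜 u) = u for every u, i.e. 𝒜⁻¹ = 𝒜.
    (∀ u : L2Space, 𝓕.symm (Mh (𝓕.symm (𝓕.symm (Mh (𝓕.symm u))))) = u) := by
  set R := Lp.reflection (E := ℂ) (p := 2) (volume : Measure ℝ)
  have hRR (u : L2Space) : R (R u) = u := Lp.reflection_reflection u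
  have hFF (u : L2Space) : 𝓕 (𝓕 u) = R u :=
    ExtendsUnitaryFourierIntegral.apply_apply h𝓕 𝓕.continuous u
  have hFF_symm (u : L2Space) : 𝓕.symm (𝓕.symm u) = R u :=
    calc 𝓕.symm (𝓕.symm u) = R (𝓕 (𝓕 (𝓕.symm (𝓕.symm u)))) := by rw [hFF, hRR]
      _ = R u := by simp only [LinearIsometryEquiv.apply_symm_apply]
  have hMRM (v : L2Space) : Mh (R (Mh v)) = R v :=
    Lp.map_reflection_map_eq_reflection cexp_I_mul_cube_div_three_mul_neg hMh v
  have hinv (u : L2Space) : 𝓕.symm (Mh (𝓕.symm (𝓕.symm (Mh (𝓕.symm u))))) = u := by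
    rw [hFF_symm, hMRM, ← hFF_symm, hFF_symm, hFF_symm, hRR]
  refine ⟨fun u => ?_,
    Function.bijective_iff_has_inverse.mpr ⟨fun u => 𝓕.symm (Mh (𝓕.symm u)), hinv, hinv⟩, hinv⟩
  rw [LinearIsometryEquiv.norm_map, Lp.norm_eq_of_ae_eq_smul_of_norm_eq_one
    (.of_forall norm_cexp_I_mul_cube_div_three) (hMh _), LinearIsometryEquiv.norm_map]
end
end

section
/- For all real x ≠ y, the Airy kernel satisfies ∫_0^∞ Ai(x+z) Ai(y+z) dz = (Ai(x) Ai'(y) − Ai(y) Ai'(x)) / (x − y). -/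
/-!
Shifting the contour of the oscillatory integral to the line `Im w = 1` turns it into the
absolutely convergent integral `Ai(u) = (2π)⁻¹ ∫ φ_u(t + i) dt`, with `φ_u(w) = exp(i(w³/3 + wu))`
and `|φ_u(t + i)| = exp(1/3 - u - t²)`. Differentiating under the integral sign gives all
derivatives of `Ai` with the same `O(e^{-u})` decay, and integrating `d/dt φ_u(t + i)` over `ℝ`
gives the Airy equation `Ai'' = u Ai`. Hence the Wronskian
`W(z) = Ai(x+z) Ai'(y+z) - Ai'(x+z) Ai(y+z)` has derivative `(y - x) Ai(x+z) Ai(y+z)` and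
vanishes at infinity, and integrating `W'` over `(0, ∞)` gives the formula.
-/

open MeasureTheory Complex Filter Set Topology

noncomputable section

theorem tendsto_intervalIntegral_of_tendsto_vertical_integral {f : ℂ → ℂ}
    (hf : Differentiable ℂ f) {c : ℝ} (hint : Integrable fun t : ℝ => f (t + c * I))
    (hvert : Tendsto (fun s : ℝ => ∫ y in (0 : ℝ)..c, f (s + y * I)) (cocompact ℝ) (𝓝 0)) :
    Tendsto (fun B : ℝ => ∫ t in (-B)..B, f t) atTop (𝓝 (∫ t : ℝ, f (t + c * I))) := by
  have hrect : ∀ B : ℝ, ∫ t in (-B)..B, f t = (∫ t in (-B)..B, f (t + c * I))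
      - I • (∫ y in (0 : ℝ)..c, f (B + y * I))
      + I • (∫ y in (0 : ℝ)..c, f ((-B : ℝ) + y * I)) := by
    intro B
    have h := integral_boundary_rect_eq_zero_of_differentiableOn f (-B : ℝ) (B + c * I)
      hf.differentiableOn
    simp only [ofReal_re, ofReal_im, add_re, add_im, mul_re, mul_im, I_re, I_im, ofReal_zero,
      zero_mul, mul_zero, mul_one, sub_zero, add_zero, zero_add] at h
    linear_combination h
  have hright := hvert.comp (tendsto_id.mono_right atTop_le_cocompact)
  have hleft := hvert.comp (tendsto_neg_atTop_atBot.mono_right atBot_le_cocompact)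
  have hbase := intervalIntegral_tendsto_integral hint tendsto_neg_atTop_atBot tendsto_id
  simpa [hrect] using (hbase.sub (hright.const_smul I)).add (hleft.const_smul I)

theorem integral_Ioi_mul_shift_eq_of_hasDerivAt {f f' : ℝ → ℝ}
    (hf : ∀ u, HasDerivAt f (f' u) u) (hf' : ∀ u, HasDerivAt f' (u * f u) u)
    (hf_top : Tendsto f atTop (𝓝 0)) (hf'_top : Tendsto f' atTop (𝓝 0)) {x y : ℝ}
    (hint : IntegrableOn (fun z => f (x + z) * f (y + z)) (Ioi 0)) (hxy : x ≠ y) :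
    ∫ z in Ioi 0, f (x + z) * f (y + z) = (f x * f' y - f y * f' x) / (x - y) := by
  set W : ℝ → ℝ := fun z => f (x + z) * f' (y + z) - f' (x + z) * f (y + z)
  have hW : ∀ z, HasDerivAt W ((y - x) * (f (x + z) * f (y + z))) z := fun z => by
    have := (((hf _).comp_const_add x z).mul ((hf' _).comp_const_add y z)).sub
      (((hf' _).comp_const_add x z).mul ((hf _).comp_const_add y z))
    exact this.congr_deriv (by ring)
  have hW_top : Tendsto W atTop (𝓝 0) := by
    have hx := tendsto_atTop_add_const_left atTop x tendsto_id
    have hy := tendsto_atTop_add_const_left atTop y tendsto_id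
    simpa using
      ((hf_top.comp hx).mul (hf'_top.comp hy)).sub ((hf'_top.comp hx).mul (hf_top.comp hy))
  have hFTC :=
    integral_Ioi_of_hasDerivAt_of_tendsto' (fun z _ => hW z) (hint.const_mul _) hW_top
  rw [integral_const_mul] at hFTC
  rw [eq_div_iff (sub_ne_zero.2 hxy)]
  simp only [W, add_zero] at hFTC
  linear_combination -hFTC

theorem integrableOn_Ioi_mul_shift_of_abs_le {f : ℝ → ℝ} (hf : Continuous f) {C : ℝ}
    (hC : ∀ u, |f u| ≤ C * Real.exp (-u)) (x y : ℝ) :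
    IntegrableOn (fun z => f (x + z) * f (y + z)) (Ioi 0) := by
  have hdom : IntegrableOn (fun z => C ^ 2 * Real.exp (-x - y) * Real.exp (-2 * z)) (Ioi 0) :=
    (exp_neg_integrableOn_Ioi 0 two_pos).const_mul _
  refine hdom.mono' (by fun_prop) (Eventually.of_forall fun z => ?_)
  calc ‖f (x + z) * f (y + z)‖ = |f (x + z)| * |f (y + z)| := by rw [norm_mul]; rfl
    _ ≤ C * Real.exp (-(x + z)) * (C * Real.exp (-(y + z))) :=
      mul_le_mul (hC _) (hC _) (abs_nonneg _) ((abs_nonneg _).trans (hC _))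
    _ = C ^ 2 * Real.exp (-x - y) * Real.exp (-2 * z) := by
      rw [mul_mul_mul_comm, ← Real.exp_add, sq, mul_assoc (C * C), ← Real.exp_add]; ring_nf

def airyPhase (u : ℝ) (w : ℂ) : ℂ := cexp (I * (w ^ 3 / 3 + w * u))

def airyIntegrand (n : ℕ) (u t : ℝ) : ℂ := (I * (t + I)) ^ n * airyPhase u (t + I)

def airyMoment (n : ℕ) (u : ℝ) : ℂ := ∫ t : ℝ, airyIntegrand n u t

def airyAiDeriv (n : ℕ) (u : ℝ) : ℝ := ((1 / (2 * Real.pi) : ℂ) * airyMoment n u).re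

theorem norm_airyPhase (u s y : ℝ) :
    ‖airyPhase u (s + y * I)‖ = Real.exp (y ^ 3 / 3 - s ^ 2 * y - u * y) := by
  rw [airyPhase, norm_exp]
  congr 1
  simp only [add_im, div_im, mul_im, mul_re, pow_succ, pow_zero, ofReal_re, ofReal_im,
    I_re, I_im, add_re, div_re]
  norm_num
  ring

theorem differentiable_airyPhase (u : ℝ) : Differentiable ℂ (airyPhase u) := by
  unfold airyPhase; fun_prop

theorem hasDerivAt_airyPhase (u : ℝ) (w : ℂ) :
    HasDerivAt (airyPhase u) (I * (w ^ 2 + u) * airyPhase u w) w := by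
  have h : HasDerivAt (fun w : ℂ => I * (w ^ 3 / 3 + w * u)) (I * (w ^ 2 + u)) w := by
    have := (((hasDerivAt_pow 3 w).div_const 3).add
      ((hasDerivAt_id w).mul_const (u : ℂ))).const_mul I
    exact this.congr_deriv (by norm_num)
  exact h.cexp.congr_deriv (mul_comm _ _)

theorem hasDerivAt_airyPhase_param (u : ℝ) (w : ℂ) :
    HasDerivAt (fun v : ℝ => airyPhase v w) (I * w * airyPhase u w) u := by
  have h : HasDerivAt (fun v : ℝ => I * (w ^ 3 / 3 + w * v)) (I * w) u := by
    simpa using (((hasDerivAt_id u).ofReal_comp.const_mul w).const_add (w ^ 3 / 3)).const_mul I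
  simpa [airyPhase, mul_comm] using h.cexp

theorem norm_add_I_pow_mul_exp_neg_sq_le (n : ℕ) (t : ℝ) :
    ‖(t : ℂ) + I‖ ^ n * Real.exp (-t ^ 2) ≤ Real.exp (n ^ 2 / 2) * Real.exp (-(1 / 2) * t ^ 2) := by
  have hnorm : ‖(t : ℂ) + I‖ ≤ Real.exp |t| := by
    calc ‖(t : ℂ) + I‖ ≤ |t| + 1 := by simpa using norm_add_le (t : ℂ) I
      _ ≤ Real.exp |t| := by linarith [Real.add_one_le_exp |t|]
  calc ‖(t : ℂ) + I‖ ^ n * Real.exp (-t ^ 2) ≤ Real.exp |t| ^ n * Real.exp (-t ^ 2) := by gcongr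
    _ = Real.exp (n * |t| - t ^ 2) := by rw [← Real.exp_nat_mul, ← Real.exp_add]; ring_nf
    _ ≤ Real.exp (n ^ 2 / 2 + -(1 / 2) * t ^ 2) := by
      gcongr; nlinarith [sq_nonneg (n - |t|), sq_abs t]
    _ = _ := Real.exp_add _ _

theorem norm_airyIntegrand (n : ℕ) (u t : ℝ) :
    ‖airyIntegrand n u t‖ = ‖(t : ℂ) + I‖ ^ n * (Real.exp (1 / 3 - u) * Real.exp (-t ^ 2)) := by
  have := norm_airyPhase u t 1
  rw [ofReal_one, one_mul] at this
  rw [airyIntegrand, norm_mul, norm_pow, norm_mul, norm_I, one_mul, this, ← Real.exp_add]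
  ring_nf

theorem norm_airyIntegrand_le (n : ℕ) (u t : ℝ) :
    ‖airyIntegrand n u t‖ ≤ Real.exp (1 / 3 - u + n ^ 2 / 2) * Real.exp (-(1 / 2) * t ^ 2) := by
  rw [norm_airyIntegrand, mul_left_comm, Real.exp_add, mul_assoc]
  exact mul_le_mul_of_nonneg_left (norm_add_I_pow_mul_exp_neg_sq_le n t) (Real.exp_pos _).le

theorem airyIntegrand_zero (u : ℝ) : airyIntegrand 0 u = fun t : ℝ => airyPhase u (t + I) := by
  funext t; simp [airyIntegrand]

theorem continuous_airyIntegrand (n : ℕ) (u : ℝ) : Continuous (airyIntegrand n u) := by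
  unfold airyIntegrand airyPhase; fun_prop

theorem integrable_airyIntegrand (n : ℕ) (u : ℝ) : Integrable (airyIntegrand n u) :=
  ((integrable_exp_neg_mul_sq (by norm_num : (0 : ℝ) < 1 / 2)).const_mul _).mono'
    (continuous_airyIntegrand n u).aestronglyMeasurable
    (Eventually.of_forall (norm_airyIntegrand_le n u))

theorem hasDerivAt_airyMoment (n : ℕ) (u : ℝ) :
    HasDerivAt (airyMoment n) (airyMoment (n + 1) u) u := by
  have hbound : ∀ v ∈ Ioi (u - 1), ∀ t, ‖airyIntegrand (n + 1) v t‖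
      ≤ Real.exp (4 / 3 - u + (n + 1 : ℕ) ^ 2 / 2) * Real.exp (-(1 / 2) * t ^ 2) := by
    intro v hv t
    refine (norm_airyIntegrand_le _ v t).trans ?_
    gcongr ?_ * _
    exact Real.exp_le_exp.2 (by linarith [mem_Ioi.1 hv])
  refine (hasDerivAt_integral_of_dominated_loc_of_deriv_le (Ioi_mem_nhds (sub_one_lt u))
    (Eventually.of_forall fun v => (continuous_airyIntegrand n v).aestronglyMeasurable)
    (integrable_airyIntegrand n u) (integrable_airyIntegrand (n + 1) u).aestronglyMeasurable
    (Eventually.of_forall fun t v hv => hbound v hv t)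
    ((integrable_exp_neg_mul_sq (by norm_num : (0 : ℝ) < 1 / 2)).const_mul _)
    (Eventually.of_forall fun t v _ => ?_)).2
  have := (hasDerivAt_airyPhase_param v ((t : ℂ) + I)).const_mul ((I * (t + I)) ^ n)
  exact this.congr_deriv (by rw [airyIntegrand, pow_succ]; ring)

theorem hasDerivAt_airyPhase_add_I (u t : ℝ) :
    HasDerivAt (fun s : ℝ => airyPhase u (s + I))
      (-I * airyIntegrand 2 u t + I * u * airyIntegrand 0 u t) t := by
  have h := ((hasDerivAt_airyPhase u ((t : ℂ) + I)).comp (t : ℂ) ((hasDerivAt_id _).add_const I))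
  refine h.comp_ofReal.congr_deriv ?_
  simp only [airyIntegrand, mul_pow, I_sq, mul_one, pow_zero, one_mul]
  ring

theorem airyMoment_two (u : ℝ) : airyMoment 2 u = u * airyMoment 0 u := by
  have h := integral_eq_zero_of_hasDerivAt_of_integrable (hasDerivAt_airyPhase_add_I u)
    (((integrable_airyIntegrand 2 u).const_mul _).add ((integrable_airyIntegrand 0 u).const_mul _))
    (airyIntegrand_zero u ▸ integrable_airyIntegrand 0 u)
  rw [integral_add ((integrable_airyIntegrand 2 u).const_mul _)
    ((integrable_airyIntegrand 0 u).const_mul _), integral_const_mul, integral_const_mul] at h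
  unfold airyMoment
  linear_combination I * h +
    ((∫ t, airyIntegrand 2 u t) - u * ∫ t, airyIntegrand 0 u t) * I_sq

theorem tendsto_integral_airyPhase_vertical (u : ℝ) :
    Tendsto (fun s : ℝ => ∫ y in (0 : ℝ)..1, airyPhase u (s + y * I)) (cocompact ℝ) (𝓝 0) := by
  have : (cocompact ℝ).IsCountablyGenerated := by
    rw [cocompact_eq_atBot_atTop]; infer_instance
  have hsq : Tendsto (fun s : ℝ => s ^ 2) (cocompact ℝ) atTop := by
    simpa only [Function.comp_def, Real.norm_eq_abs, sq_abs] using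
      (tendsto_pow_atTop two_ne_zero).comp (tendsto_norm_cocompact_atTop (E := ℝ))
  have hbound : ∀ s : ℝ, ∀ y ∈ uIoc (0 : ℝ) 1,
      ‖airyPhase u (s + y * I)‖ ≤ Real.exp (1 / 3 + |u|) := by
    intro s y hy
    rw [uIoc_of_le zero_le_one] at hy
    rw [norm_airyPhase]
    refine Real.exp_le_exp.2 ?_
    have : y ^ 3 ≤ 1 := pow_le_one₀ hy.1.le hy.2
    nlinarith [neg_abs_le u, abs_nonneg u, hy.1, hy.2, mul_nonneg (sq_nonneg s) hy.1.le]
  have hlim : ∀ y ∈ uIoc (0 : ℝ) 1,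
      Tendsto (fun s : ℝ => airyPhase u (s + y * I)) (cocompact ℝ) (𝓝 0) := by
    intro y hy
    rw [uIoc_of_le zero_le_one] at hy
    rw [tendsto_zero_iff_norm_tendsto_zero]
    simp only [norm_airyPhase]
    refine Real.tendsto_exp_atBot.comp ?_
    have := tendsto_atBot_add_const_left _ (y ^ 3 / 3 - u * y)
      (tendsto_neg_atTop_atBot.comp (hsq.atTop_mul_const hy.1))
    exact this.congr fun s => by simp only [Function.comp_apply]; ring
  simpa using intervalIntegral.tendsto_integral_filter_of_dominated_convergence
    (F := fun (s y : ℝ) => airyPhase u (s + y * I)) _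
    (Eventually.of_forall fun s =>
      (by unfold airyPhase; fun_prop : Continuous _).aestronglyMeasurable)
    (Eventually.of_forall fun s => ae_of_all _ (hbound s)) intervalIntegrable_const
    (ae_of_all _ hlim)

theorem tendsto_integral_airyPhase (u : ℝ) :
    Tendsto (fun B : ℝ => ∫ t in (-B)..B, airyPhase u t) atTop (𝓝 (airyMoment 0 u)) := by
  have h := tendsto_intervalIntegral_of_tendsto_vertical_integral (differentiable_airyPhase u)
    (c := 1) (by simpa [airyIntegrand_zero] using integrable_airyIntegrand 0 u)
    (by simpa using tendsto_integral_airyPhase_vertical u)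
  simpa [airyMoment, airyIntegrand_zero] using h

theorem exists_norm_airyMoment_le (n : ℕ) : ∃ C, ∀ u, ‖airyMoment n u‖ ≤ C * Real.exp (-u) := by
  refine ⟨Real.exp (1 / 3 + n ^ 2 / 2) * ∫ t : ℝ, Real.exp (-(1 / 2) * t ^ 2), fun u => ?_⟩
  calc ‖airyMoment n u‖
        ≤ ∫ t : ℝ, Real.exp (1 / 3 - u + n ^ 2 / 2) * Real.exp (-(1 / 2) * t ^ 2) :=
        norm_integral_le_of_norm_le ((integrable_exp_neg_mul_sq (by norm_num)).const_mul _)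
          (Eventually.of_forall (norm_airyIntegrand_le n u))
    _ = _ := by rw [integral_const_mul, mul_right_comm, ← Real.exp_add]; ring_nf

theorem hasDerivAt_airyAiDeriv (n : ℕ) (u : ℝ) :
    HasDerivAt (airyAiDeriv n) (airyAiDeriv (n + 1) u) u :=
  reCLM.hasFDerivAt.comp_hasDerivAt u ((hasDerivAt_airyMoment n u).const_mul _)

theorem airyAiDeriv_two (u : ℝ) : airyAiDeriv 2 u = u * airyAiDeriv 0 u := by
  simp only [airyAiDeriv, airyMoment_two, mul_left_comm _ (u : ℂ), re_ofReal_mul]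

theorem exists_abs_airyAiDeriv_le (n : ℕ) :
    ∃ C, ∀ u, |airyAiDeriv n u| ≤ C * Real.exp (-u) := by
  obtain ⟨C, hC⟩ := exists_norm_airyMoment_le n
  refine ⟨‖(1 / (2 * Real.pi) : ℂ)‖ * C, fun u => ?_⟩
  calc |airyAiDeriv n u| ≤ ‖(1 / (2 * Real.pi) : ℂ) * airyMoment n u‖ := abs_re_le_norm _
    _ ≤ _ := by rw [norm_mul, mul_assoc]; gcongr; exact hC u

theorem tendsto_airyAiDeriv_atTop (n : ℕ) : Tendsto (airyAiDeriv n) atTop (𝓝 0) := by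
  obtain ⟨C, hC⟩ := exists_abs_airyAiDeriv_le n
  exact squeeze_zero_norm hC (by simpa using Real.tendsto_exp_neg_atTop_nhds_zero.const_mul C)

theorem airy_kernel_formula_general
    (Ai : ℝ → ℝ)
    (hAi : ∀ x : ℝ, Tendsto
      (fun B : ℝ => (1 / (2 * Real.pi) : ℂ) *
        ∫ t in (-B)..B, Complex.exp (Complex.I * ((t : ℂ) ^ 3 / 3 + (t : ℂ) * (x : ℂ))))
      atTop (nhds ((Ai x : ℝ) : ℂ)))
    (x y : ℝ) (hxy : x ≠ y) :
    IntegrableOn (fun z : ℝ => Ai (x + z) * Ai (y + z)) (Ioi 0) volume ∧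
    ∫ z in Ioi (0 : ℝ), Ai (x + z) * Ai (y + z) =
      (Ai x * deriv Ai y - Ai y * deriv Ai x) / (x - y) := by
  obtain rfl : Ai = airyAiDeriv 0 := funext fun u => by
    simpa [airyAiDeriv] using congrArg re
      (tendsto_nhds_unique (hAi u) ((tendsto_integral_airyPhase u).const_mul _))
  have hAi_cont : Continuous (airyAiDeriv 0) :=
    continuous_iff_continuousAt.2 fun u => (hasDerivAt_airyAiDeriv 0 u).continuousAt
  obtain ⟨C, hC⟩ := exists_abs_airyAiDeriv_le 0
  have hint := integrableOn_Ioi_mul_shift_of_abs_le hAi_cont hC x y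
  refine ⟨hint, ?_⟩
  rw [(hasDerivAt_airyAiDeriv 0 x).deriv, (hasDerivAt_airyAiDeriv 0 y).deriv]
  exact integral_Ioi_mul_shift_eq_of_hasDerivAt (hasDerivAt_airyAiDeriv 0)
    (fun u => airyAiDeriv_two u ▸ hasDerivAt_airyAiDeriv 1 u) (tendsto_airyAiDeriv_atTop 0)
    (tendsto_airyAiDeriv_atTop 1) hint hxy

/-- For all real `x ≠ y`, the Airy kernel satisfies
`∫_0^∞ Ai(x+z) Ai(y+z) dz = (Ai(x) Ai'(y) − Ai(y) Ai'(x)) / (x − y)`,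
where `Ai` is the Airy function, characterized by
`Ai(x) = lim_{B→∞} (1/(2π)) ∫_{-B}^{B} e^{i(t³/3 + tx)} dt`; `Ai` is differentiable
and the integral on the left converges (is absolutely integrable on `(0, ∞)`). -/
theorem airy_kernel_formula
    (Ai : ℝ → ℝ)
    (hAi : ∀ x : ℝ, Tendsto
      (fun B : ℝ => (1 / (2 * Real.pi) : ℂ) *
        ∫ t in (-B)..B, Complex.exp (Complex.I * ((t : ℂ) ^ 3 / 3 + (t : ℂ) * (x : ℂ))))
      atTop (nhds ((Ai x : ℝ) : ℂ)))
    (hAidiff : Differentiable ℝ Ai)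
    (x y : ℝ) (hxy : x ≠ y) :
    IntegrableOn (fun z : ℝ => Ai (x + z) * Ai (y + z)) (Ioi 0) volume ∧
    ∫ z in Ioi (0 : ℝ), Ai (x + z) * Ai (y + z) =
      (Ai x * deriv Ai y - Ai y * deriv Ai x) / (x - y) :=
  airy_kernel_formula_general Ai hAi x y hxy
end
end

section
/- For every real η and every Schwartz function φ : ℝ → ℂ, the operator M_h ∘ 𝓕⁻¹ ∘ M_{e_η} ∘ 𝓕 ∘ M_{h⁻¹} applied to φ gives, for every ξ ∈ ℝ: (M_h 𝓕⁻¹ M_{e_η} 𝓕 M_{h⁻¹} φ)(ξ) = (2π)^{-1/2} e^{-i(ξ²η + ξη² + η³/3)} φ(ξ + η). -/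
/-!
Multiplication by `h⁻¹` preserves Schwartz space because `h` is a unimodular phase of temperate
growth, so `g = h⁻¹ φ` is Schwartz. The inner integral is the Fourier transform of `g` in the
angular-frequency convention, the factors `e_η(x)` and `e^{iξx}` merge into `e^{i(ξ+η)x}`, and
Fourier inversion for `g` returns `(2π)^{-1/2} h(ξ) h(ξ+η)⁻¹ φ(ξ+η)`; expanding `(ξ+η)³` gives
the phase.
-/

open MeasureTheory Complex Real FourierTransform

lemma iteratedDeriv_cexp_ofReal_mul_I (n : ℕ) :
    iteratedDeriv n (fun t : ℝ ↦ cexp (t * I)) = fun t : ℝ ↦ I ^ n * cexp (t * I) := by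
  induction n with
  | zero => simp
  | succ n ih =>
    ext t
    rw [iteratedDeriv_succ, ih]
    have h := (((hasDerivAt_id t).ofReal_comp.mul_const I).cexp).const_mul (I ^ n)
    simp only [id, ofReal_one, one_mul] at h
    rw [h.deriv]
    ring

lemma hasTemperateGrowth_cexp_ofReal_mul_I :
    (fun t : ℝ ↦ cexp (t * I)).HasTemperateGrowth := by
  refine ⟨(ofRealCLM.contDiff.mul contDiff_const).cexp, fun n ↦ ⟨0, 1, fun t ↦ ?_⟩⟩
  rw [norm_iteratedFDeriv_eq_norm_iteratedDeriv, iteratedDeriv_cexp_ofReal_mul_I]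
  simp [norm_exp_ofReal_mul_I]

lemma Function.HasTemperateGrowth.cexp_ofReal_mul_I {E : Type*} [NormedAddCommGroup E]
    [NormedSpace ℝ E] {f : E → ℝ} (hf : f.HasTemperateGrowth) :
    (fun x ↦ cexp (f x * I)).HasTemperateGrowth :=
  hasTemperateGrowth_cexp_ofReal_mul_I.comp hf

lemma hasTemperateGrowth_cexp_neg_I_mul_pow_three_div_three :
    (fun t : ℝ ↦ cexp (-I * t ^ 3 / 3)).HasTemperateGrowth := by
  have : (fun t : ℝ ↦ -(1 / 3) * t ^ 3).HasTemperateGrowth := by fun_prop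
  convert this.cexp_ofReal_mul_I using 3
  push_cast
  ring

lemma integral_mul_cexp_neg_I_mul_eq_fourier (g : ℝ → ℂ) (x : ℝ) :
    ∫ t, g t * cexp (-I * x * t) = 𝓕 g (x / (2 * π)) := by
  rw [Real.fourier_eq']
  congr 1 with t
  rw [smul_eq_mul, mul_comm]
  congr 2
  simp only [RCLike.inner_apply, conj_trivial]
  push_cast
  field_simp

lemma integral_comp_div_mul_cexp_I_mul_eq_fourierInv (f : ℝ → ℂ) (y : ℝ) :
    ∫ x, f (x / (2 * π)) * cexp (I * y * x) = 2 * π * 𝓕⁻ f y := by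
  have hx : ∀ x : ℝ, I * y * x = ((2 * π * (x / (2 * π) * y) : ℝ) : ℂ) * I := fun x ↦ by
    push_cast
    field_simp
  simp_rw [hx, Real.fourierInv_eq', RCLike.inner_apply, conj_trivial, smul_eq_mul]
  rw [Measure.integral_comp_div (fun u : ℝ ↦ f u * cexp (((2 * π * (u * y)) : ℝ) * I)),
    abs_of_pos two_pi_pos, real_smul]
  push_cast
  congr 2 with u
  rw [mul_comm (u : ℂ), mul_comm]

theorem SchwartzMap.angular_fourierInv_fourier_eq (g : SchwartzMap ℝ ℂ) (y : ℝ) :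
    ∫ x : ℝ, (∫ t, g t * cexp (-I * x * t)) * cexp (I * y * x) = 2 * π * g y := by
  simp_rw [integral_mul_cexp_neg_I_mul_eq_fourier]
  rw [integral_comp_div_mul_cexp_I_mul_eq_fourierInv, ← fourier_coe, ← fourierInv_coe,
    fourierInv_fourier_eq]

lemma Real.rpow_neg_one_div_two_eq_inv_sqrt {x : ℝ} (hx : 0 ≤ x) :
    x ^ (-(1 : ℝ) / 2) = (√x)⁻¹ := by
  rw [neg_div, rpow_neg hx, sqrt_eq_rpow]

/-- For every real `η` and every Schwartz function `φ`, the operator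
`M_h ∘ 𝓕⁻¹ ∘ M_{e_η} ∘ 𝓕 ∘ M_{h⁻¹}` (with `h(t) = e^{it³/3}` and
`e_η(x) = e^{iηx}/√(2π)`) applied to `φ` gives, for every `ξ ∈ ℝ`,
`(2π)^{-1/2} e^{-i(ξ²η + ξη² + η³/3)} φ(ξ + η)`.  All the transforms are written out
as (absolutely convergent) integrals: `𝓕 g(x) = (2π)^{-1/2} ∫ g(t) e^{-ixt} dt` and
`𝓕⁻¹ g(ξ) = (2π)^{-1/2} ∫ g(x) e^{iξx} dx`. -/
theorem conjugated_translation_formula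
    (η : ℝ) (φ : SchwartzMap ℝ ℂ) (ξ : ℝ) :
    Complex.exp (Complex.I * (ξ : ℂ) ^ 3 / 3) *
      ((((2 * Real.pi : ℝ) ^ (-(1 : ℝ) / 2) : ℝ) : ℂ) *
        ∫ x : ℝ,
          ((Complex.exp (Complex.I * (η : ℂ) * (x : ℂ)) / (Real.sqrt (2 * Real.pi) : ℂ)) *
            ((((2 * Real.pi : ℝ) ^ (-(1 : ℝ) / 2) : ℝ) : ℂ) *
              ∫ t : ℝ, Complex.exp (-Complex.I * (t : ℂ) ^ 3 / 3) * φ t *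
                Complex.exp (-Complex.I * (x : ℂ) * (t : ℂ)))) *
            Complex.exp (Complex.I * (ξ : ℂ) * (x : ℂ)))
    = (((2 * Real.pi : ℝ) ^ (-(1 : ℝ) / 2) : ℝ) : ℂ) *
        Complex.exp (-Complex.I * ((ξ : ℂ) ^ 2 * (η : ℂ) + (ξ : ℂ) * (η : ℂ) ^ 2 +
          (η : ℂ) ^ 3 / 3)) * φ (ξ + η) := by
  set g := SchwartzMap.smulLeftCLM ℂ (fun t : ℝ ↦ cexp (-I * t ^ 3 / 3)) φ
  have hg : ∀ t, g t = cexp (-I * t ^ 3 / 3) * φ t :=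
    SchwartzMap.smulLeftCLM_apply_apply hasTemperateGrowth_cexp_neg_I_mul_pow_three_div_three φ
  rw [rpow_neg_one_div_two_eq_inv_sqrt two_pi_pos.le, ofReal_inv]
  set s : ℂ := ((√(2 * π) : ℝ) : ℂ)
  have hs : s ≠ 0 := by simp [s, pi_pos.le]
  have hs2 : s ^ 2 = 2 * π := by
    simp only [s, ← ofReal_pow, sq_sqrt two_pi_pos.le]
    push_cast
    ring
  have houter : ∀ x : ℝ, cexp (I * η * x) / s * (s⁻¹ * ∫ t, g t * cexp (-I * x * t)) *
      cexp (I * ξ * x) =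
        s⁻¹ * s⁻¹ * ((∫ t, g t * cexp (-I * x * t)) * cexp (I * ↑(ξ + η) * x)) := by
    intro x
    push_cast
    rw [mul_add, add_mul, Complex.exp_add]
    ring
  have hphase : cexp (I * ξ ^ 3 / 3) * cexp (-I * ↑(ξ + η) ^ 3 / 3) =
      cexp (-I * (ξ ^ 2 * η + ξ * η ^ 2 + η ^ 3 / 3)) := by
    rw [← Complex.exp_add]
    push_cast
    ring_nf
  simp_rw [← hg, houter, integral_const_mul, SchwartzMap.angular_fourierInv_fourier_eq, hg, ← hs2,
    ← hphase]
  field_simp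
end

section
/- There is a constant C > 0 such that the Airy function satisfies: ∫_0^∞ Ai(x+z)² dx ≤ C e^{-z} for all z ≥ 0, and ∫_0^∞ Ai(x+z)² dx ≤ C (1 + z²)^{1/4} for all z ≤ 0. -/
/-!
Shifting the contour of the Airy integral to the line `Im t = 1` turns the oscillatory kernel
into a Gaussian of mass `e^{1/3 - x} √π`; hence `|Ai x| ≤ K e^{-x}` for a constant `K` and every
`x`, and `Ai` is continuous. For `x = -q⁴ ≤ -1` the symmetrised integral reads
`Ai x = (1/π) lim ∫₀^B cos(t³/3 - q⁴t) dt`. The phase is stationary at `q²`: the window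
`[q² - 1/q, q² + 1/q]` contributes at most `2/q`, and on either side the phase derivative is at
least `q` in absolute value, so van der Corput's first-derivative estimate gives
`|Ai x| ≤ 10/(π q) = (10/π) |x|^{-1/4}`. The exponential bound then controls
`∫_{max(z,-1)}^∞ Ai²`, and `∫_z^{-1} (-u)^{-1/2} du ≤ 2 √(-z)` controls the rest.
-/

open MeasureTheory Complex Filter Set
open scoped Real Topology

noncomputable section

theorem integral_exp_neg_mul_le_inv {c : ℝ} (hc : 0 < c) :
    ∫ u in (0 : ℝ)..1, rexp (-c * u) ≤ c⁻¹ := by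
  rw [intervalIntegral.integral_comp_mul_left (fun u => rexp u) (neg_ne_zero.2 hc.ne'),
    integral_exp, smul_eq_mul, mul_zero, Real.exp_zero, mul_one]
  have := Real.exp_pos (-c)
  rw [inv_neg, neg_mul, ← mul_neg, neg_sub]
  exact mul_le_of_le_one_right (inv_nonneg.2 hc.le) (by linarith)

theorem abs_integral_mul_deriv_le {u u' v v' : ℝ → ℝ} {a b : ℝ} (hab : a ≤ b)
    (hu : ∀ t ∈ Icc a b, HasDerivAt u (u' t) t) (hv : ∀ t ∈ Icc a b, HasDerivAt v (v' t) t)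
    (hu'_cont : ContinuousOn u' (Icc a b)) (hu'_nonpos : ∀ t ∈ Icc a b, u' t ≤ 0)
    (hv' : IntervalIntegrable v' volume a b) (hv_le : ∀ t, |v t| ≤ 1) :
    |∫ t in a..b, u t * v' t| ≤ 2 * (|u a| + |u b|) := by
  have hu' : IntervalIntegrable u' volume a b :=
    hu'_cont.intervalIntegrable_of_Icc hab
  have hrem : |∫ t in a..b, u' t * v t| ≤ u a - u b :=
    calc |∫ t in a..b, u' t * v t| ≤ ∫ t in a..b, -u' t := by
          rw [← Real.norm_eq_abs]
          refine intervalIntegral.norm_integral_le_of_norm_le hab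
            (Eventually.of_forall fun t ht => ?_) (f := fun t => u' t * v t) hu'.neg
          rw [Real.norm_eq_abs, abs_mul, abs_of_nonpos (hu'_nonpos t (Ioc_subset_Icc_self ht))]
          exact mul_le_of_le_one_right (by linarith [hu'_nonpos t (Ioc_subset_Icc_self ht)])
            (hv_le t)
      _ = u a - u b := by
          rw [intervalIntegral.integral_neg,
            intervalIntegral.integral_eq_sub_of_hasDerivAt (by rwa [uIcc_of_le hab]) hu', neg_sub]
  rw [intervalIntegral.integral_mul_deriv_eq_deriv_mul (by rwa [uIcc_of_le hab])
    (by rwa [uIcc_of_le hab]) hu' hv']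
  calc |u b * v b - u a * v a - ∫ t in a..b, u' t * v t|
      ≤ |u b| * |v b| + |u a| * |v a| + |∫ t in a..b, u' t * v t| := by
        rw [← abs_mul, ← abs_mul]
        exact (abs_sub _ _).trans (add_le_add_left (abs_sub _ _) _)
    _ ≤ |u b| + |u a| + (|u a| + |u b|) := by
        gcongr
        · exact mul_le_of_le_one_right (abs_nonneg _) (hv_le b)
        · exact mul_le_of_le_one_right (abs_nonneg _) (hv_le a)
        · exact hrem.trans (by linarith [le_abs_self (u a), neg_abs_le (u b)])
    _ = 2 * (|u a| + |u b|) := by ring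

theorem abs_integral_cos_le_of_deriv_ne_zero {φ φ' φ'' : ℝ → ℝ} {a b : ℝ} (hab : a ≤ b)
    (hφ : ∀ t ∈ Icc a b, HasDerivAt φ (φ' t) t) (hφ' : ∀ t ∈ Icc a b, HasDerivAt φ' (φ'' t) t)
    (hφ''_cont : ContinuousOn φ'' (Icc a b)) (hφ''_nonneg : ∀ t ∈ Icc a b, 0 ≤ φ'' t)
    (hφ'_ne : ∀ t ∈ Icc a b, φ' t ≠ 0) :
    |∫ t in a..b, Real.cos (φ t)| ≤ 2 * (|φ' a|⁻¹ + |φ' b|⁻¹) := by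
  have hφ_cont : ContinuousOn φ (Icc a b) := fun t ht =>
    (hφ t ht).continuousAt.continuousWithinAt
  have hφ'_cont : ContinuousOn φ' (Icc a b) := fun t ht =>
    (hφ' t ht).continuousAt.continuousWithinAt
  have hcos : ∫ t in a..b, Real.cos (φ t) = ∫ t in a..b, (φ' t)⁻¹ * (Real.cos (φ t) * φ' t) := by
    refine intervalIntegral.integral_congr fun t ht => ?_
    rw [uIcc_of_le hab] at ht
    field_simp [hφ'_ne t ht]
  rw [hcos, ← abs_inv, ← abs_inv]
  refine abs_integral_mul_deriv_le hab (fun t ht => (hφ' t ht).inv (hφ'_ne t ht))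
    (fun t ht => (hφ t ht).sin) ?_ (fun t ht => ?_) ?_ (fun t => Real.abs_sin_le_one _)
  · exact hφ''_cont.neg.div (hφ'_cont.pow 2) fun t ht => pow_ne_zero 2 (hφ'_ne t ht)
  · exact div_nonpos_of_nonpos_of_nonneg (neg_nonpos.2 (hφ''_nonneg t ht)) (sq_nonneg _)
  · exact ((Real.continuous_cos.comp_continuousOn hφ_cont).mul hφ'_cont).intervalIntegrable_of_Icc
      hab

theorem integral_comp_add_right_Ioi {E : Type*} [NormedAddCommGroup E] [NormedSpace ℝ E]
    (g : ℝ → E) (z : ℝ) : ∫ x in Ioi 0, g (x + z) = ∫ u in Ioi z, g u := by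
  have h := (measurePreserving_add_right volume z).setIntegral_preimage_emb
    (measurableEmbedding_addRight z) g (Ioi z)
  rwa [preimage_add_const_Ioi, sub_self] at h

theorem integrableOn_comp_add_right_Ioi_iff {E : Type*} [NormedAddCommGroup E] (g : ℝ → E)
    (z : ℝ) : IntegrableOn (fun x => g (x + z)) (Ioi 0) ↔ IntegrableOn g (Ioi z) := by
  have h := (measurePreserving_add_right volume z).integrableOn_comp_preimage
    (measurableEmbedding_addRight z) (f := g) (s := Ioi z)
  rwa [preimage_add_const_Ioi, sub_self] at h

section DecayBounds

variable {f : ℝ → ℝ} {K M : ℝ}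

theorem sq_le_of_abs_le_mul_exp_neg (hK : ∀ x, |f x| ≤ K * rexp (-x)) (x : ℝ) :
    f x ^ 2 ≤ K ^ 2 * rexp (-2 * x) := by
  calc f x ^ 2 = |f x| ^ 2 := (sq_abs _).symm
    _ ≤ (K * rexp (-x)) ^ 2 := pow_le_pow_left₀ (abs_nonneg _) (hK x) 2
    _ = K ^ 2 * rexp (-2 * x) := by rw [mul_pow, ← Real.exp_nat_mul]; ring_nf

theorem integrableOn_sq_Ioi_of_abs_le_mul_exp_neg (hf : Measurable f)
    (hK : ∀ x, |f x| ≤ K * rexp (-x)) (a : ℝ) : IntegrableOn (fun x => f x ^ 2) (Ioi a) :=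
  ((integrableOn_exp_mul_Ioi (by norm_num : (-2 : ℝ) < 0) a).const_mul (K ^ 2)).mono'
    (hf.pow_const 2).aestronglyMeasurable (Eventually.of_forall fun x => by
      rw [Real.norm_eq_abs, abs_of_nonneg (sq_nonneg _)]
      exact sq_le_of_abs_le_mul_exp_neg hK x)

theorem setIntegral_sq_Ioi_le_of_abs_le_mul_exp_neg (hf : Measurable f)
    (hK : ∀ x, |f x| ≤ K * rexp (-x)) (a : ℝ) :
    ∫ x in Ioi a, f x ^ 2 ≤ K ^ 2 / 2 * rexp (-2 * a) := by
  calc ∫ x in Ioi a, f x ^ 2 ≤ ∫ x in Ioi a, K ^ 2 * rexp (-2 * x) :=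
        setIntegral_mono (integrableOn_sq_Ioi_of_abs_le_mul_exp_neg hf hK a)
          ((integrableOn_exp_mul_Ioi (by norm_num) a).const_mul _)
          (sq_le_of_abs_le_mul_exp_neg hK)
    _ = K ^ 2 / 2 * rexp (-2 * a) := by
        rw [integral_const_mul, integral_exp_mul_Ioi (by norm_num)]
        ring

theorem setIntegral_sq_Ioc_le_of_abs_le_mul_rpow (hf : Measurable f)
    (hM : ∀ x ≤ -1, |f x| ≤ M * (-x) ^ (-(1 / 4) : ℝ)) {z : ℝ} (hz : z ≤ -1) :
    ∫ x in Ioc z (-1), f x ^ 2 ≤ 2 * M ^ 2 * (-z) ^ (1 / 2 : ℝ) := by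
  have hpos : ∀ x ∈ Icc z (-1), 0 < -x := fun x hx => by linarith [hx.2]
  have hdom : ∀ x ∈ Ioc z (-1), f x ^ 2 ≤ M ^ 2 * (-x) ^ (-(1 / 2) : ℝ) := fun x hx => by
    have hx0 := hpos x (Ioc_subset_Icc_self hx)
    calc f x ^ 2 = |f x| ^ 2 := (sq_abs _).symm
      _ ≤ (M * (-x) ^ (-(1 / 4) : ℝ)) ^ 2 := pow_le_pow_left₀ (abs_nonneg _) (hM x hx.2) 2
      _ = M ^ 2 * (-x) ^ (-(1 / 2) : ℝ) := by
        rw [mul_pow, ← Real.rpow_mul_natCast hx0.le]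
        norm_num
  have hcont : ContinuousOn (fun x : ℝ => M ^ 2 * (-x) ^ (-(1 / 2) : ℝ)) (Icc z (-1)) :=
    continuousOn_const.mul (continuousOn_neg.rpow_const fun x hx => Or.inl (hpos x hx).ne')
  have hint : IntegrableOn (fun x : ℝ => M ^ 2 * (-x) ^ (-(1 / 2) : ℝ)) (Ioc z (-1)) :=
    (hcont.integrableOn_Icc).mono_set Ioc_subset_Icc_self
  have hrpow : ∫ x in z..(-1), (-x) ^ (-(1 / 2) : ℝ) = 2 * ((-z) ^ (1 / 2 : ℝ) - 1) := by
    rw [intervalIntegral.integral_comp_neg (fun x : ℝ => x ^ (-(1 / 2) : ℝ)), neg_neg,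
      integral_rpow (Or.inl (by norm_num)), Real.one_rpow]
    norm_num
    ring
  calc ∫ x in Ioc z (-1), f x ^ 2 ≤ ∫ x in Ioc z (-1), M ^ 2 * (-x) ^ (-(1 / 2) : ℝ) :=
        setIntegral_mono_on (hint.mono' (hf.pow_const 2).aestronglyMeasurable.restrict
          ((ae_restrict_iff' measurableSet_Ioc).2 (Eventually.of_forall fun x hx => by
            rw [Real.norm_eq_abs, abs_of_nonneg (sq_nonneg _)]; exact hdom x hx)))
          hint measurableSet_Ioc hdom
    _ = 2 * M ^ 2 * ((-z) ^ (1 / 2 : ℝ) - 1) := by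
        rw [integral_const_mul, ← intervalIntegral.integral_of_le hz, hrpow]
        ring
    _ ≤ 2 * M ^ 2 * (-z) ^ (1 / 2 : ℝ) := by nlinarith [sq_nonneg M]

theorem rpow_half_neg_le_one_add_sq_rpow_quarter {z : ℝ} (hz : z ≤ 0) :
    (-z) ^ (1 / 2 : ℝ) ≤ (1 + z ^ 2) ^ (1 / 4 : ℝ) := by
  have hz2 : (-z) ^ (1 / 2 : ℝ) = (z ^ 2) ^ (1 / 4 : ℝ) := by
    rw [← neg_sq, ← Real.rpow_natCast, ← Real.rpow_mul (by linarith)]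
    norm_num
  rw [hz2]
  exact Real.rpow_le_rpow (sq_nonneg z) (by linarith) (by norm_num)

theorem setIntegral_sq_Ioi_le_of_nonpos (hf : Measurable f) (hK : ∀ x, |f x| ≤ K * rexp (-x))
    (hM : ∀ x ≤ -1, |f x| ≤ M * (-x) ^ (-(1 / 4) : ℝ)) {z : ℝ} (hz : z ≤ 0) :
    ∫ x in Ioi z, f x ^ 2 ≤ (K ^ 2 / 2 * rexp 2 + 2 * M ^ 2) * (1 + z ^ 2) ^ (1 / 4 : ℝ) := by
  have hone : 1 ≤ (1 + z ^ 2) ^ (1 / 4 : ℝ) :=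
    Real.one_le_rpow (by nlinarith) (by norm_num)
  have hK2 : 0 ≤ K ^ 2 / 2 * rexp 2 := by positivity
  have hM2 : 0 ≤ 2 * M ^ 2 := by positivity
  have hfar : ∫ x in Ioi (max z (-1)), f x ^ 2 ≤ K ^ 2 / 2 * rexp 2 := by
    refine (setIntegral_sq_Ioi_le_of_abs_le_mul_exp_neg hf hK _).trans ?_
    gcongr
    linarith [le_max_right z (-1)]
  rcases le_total (-1) z with hz1 | hz1
  · rw [max_eq_left hz1] at hfar
    nlinarith [mul_le_mul_of_nonneg_left hone hK2, mul_le_mul_of_nonneg_left hone hM2]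
  · rw [max_eq_right hz1] at hfar
    have hint := integrableOn_sq_Ioi_of_abs_le_mul_exp_neg hf hK z
    rw [← Ioc_union_Ioi_eq_Ioi hz1, setIntegral_union (Ioc_disjoint_Ioi le_rfl) measurableSet_Ioi
      (hint.mono_set Ioc_subset_Ioi_self) (hint.mono_set (Ioi_subset_Ioi hz1))]
    have hnear := setIntegral_sq_Ioc_le_of_abs_le_mul_rpow hf hM hz1
    have hsqrt := rpow_half_neg_le_one_add_sq_rpow_quarter hz
    nlinarith [mul_le_mul_of_nonneg_left hone hK2, mul_le_mul_of_nonneg_left hsqrt hM2]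

theorem exists_integral_sq_comp_add_le (hf : Measurable f) (hK0 : 0 < K)
    (hK : ∀ x, |f x| ≤ K * rexp (-x)) (hM : ∀ x ≤ -1, |f x| ≤ M * (-x) ^ (-(1 / 4) : ℝ)) :
    ∃ C : ℝ, 0 < C ∧
      (∀ z : ℝ, IntegrableOn (fun x : ℝ => (f (x + z)) ^ 2) (Ioi 0) volume) ∧
      (∀ z : ℝ, 0 ≤ z →
        ∫ x in Ioi (0 : ℝ), (f (x + z)) ^ 2 ≤ C * Real.exp (-z)) ∧
      (∀ z : ℝ, z ≤ 0 →
        ∫ x in Ioi (0 : ℝ), (f (x + z)) ^ 2 ≤ C * (1 + z ^ 2) ^ ((1 : ℝ) / 4)) := by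
  refine ⟨K ^ 2 / 2 * rexp 2 + 2 * M ^ 2, by positivity, fun z => ?_, fun z hz => ?_,
    fun z hz => ?_⟩ <;>
    simp only [integrableOn_comp_add_right_Ioi_iff (fun x => f x ^ 2),
      integral_comp_add_right_Ioi (fun x => f x ^ 2)]
  · exact integrableOn_sq_Ioi_of_abs_le_mul_exp_neg hf hK z
  · refine (setIntegral_sq_Ioi_le_of_abs_le_mul_exp_neg hf hK z).trans ?_
    have h2z : rexp (-2 * z) ≤ rexp (-z) := Real.exp_le_exp.2 (by linarith)
    have he2 : rexp (-z) ≤ rexp 2 * rexp (-z) :=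
      le_mul_of_one_le_left (Real.exp_pos _).le (Real.one_le_exp (by norm_num))
    have hK2 : 0 ≤ K ^ 2 / 2 := by positivity
    nlinarith [mul_le_mul_of_nonneg_left h2z hK2, mul_le_mul_of_nonneg_left he2 hK2,
      mul_nonneg (sq_nonneg M) (Real.exp_pos (-z)).le]
  · simpa only [one_div] using setIntegral_sq_Ioi_le_of_nonpos hf hK hM hz

end DecayBounds

namespace Airy

def airyKernel (x : ℝ) (s : ℂ) : ℂ := cexp (I * (s ^ 3 / 3 + s * x))

theorem differentiable_airyKernel (x : ℝ) : Differentiable ℂ (airyKernel x) := by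
  unfold airyKernel; fun_prop

theorem norm_airyKernel (x t u : ℝ) :
    ‖airyKernel x (t + u * I)‖ = rexp (u ^ 3 / 3 - t ^ 2 * u - u * x) := by
  rw [airyKernel, norm_exp]
  congr 1
  simp only [pow_succ, pow_zero, one_mul, mul_re, I_re, add_re, div_ofNat_re, ofReal_re, mul_zero,
    ofReal_im, I_im, mul_one, sub_self, add_zero, add_im, mul_im, zero_add, sub_zero, zero_mul,
    div_ofNat_im, zero_sub, neg_add_rev]
  ring

theorem norm_integral_airyKernel_vertical_le (x a : ℝ) (ha : a ≠ 0) :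
    ‖∫ u in (0 : ℝ)..1, airyKernel x (a + u * I)‖ ≤ rexp (1 / 3 + |x|) / a ^ 2 := by
  have ha2 : 0 < a ^ 2 := by positivity
  calc ‖∫ u in (0 : ℝ)..1, airyKernel x (a + u * I)‖
      ≤ ∫ u in (0 : ℝ)..1, rexp (1 / 3 + |x|) * rexp (-a ^ 2 * u) := by
        refine intervalIntegral.norm_integral_le_of_norm_le zero_le_one
          (Eventually.of_forall fun u hu => ?_) (Continuous.intervalIntegrable (by fun_prop) _ _)
        rw [norm_airyKernel, ← Real.exp_add, Real.exp_le_exp]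
        have hu1 : u ^ 3 ≤ 1 := pow_le_one₀ hu.1.le hu.2
        have hux : -(u * x) ≤ |x| := by
          nlinarith [neg_abs_le x, le_abs_self x, hu.1, hu.2]
        nlinarith [mul_nonneg (sq_nonneg a) hu.1.le]
    _ ≤ rexp (1 / 3 + |x|) * (a ^ 2)⁻¹ := by
        rw [intervalIntegral.integral_const_mul]
        exact mul_le_mul_of_nonneg_left (integral_exp_neg_mul_le_inv ha2) (Real.exp_pos _).le
    _ = rexp (1 / 3 + |x|) / a ^ 2 := (div_eq_mul_inv _ _).symm

theorem tendsto_integral_airyKernel_vertical (x : ℝ) :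
    Tendsto (fun a : ℝ => ∫ u in (0 : ℝ)..1, airyKernel x (a + u * I)) (cocompact ℝ) (𝓝 0) := by
  have hsq : Tendsto (fun a : ℝ => a ^ 2) (cocompact ℝ) atTop := by
    refine ((tendsto_pow_atTop two_ne_zero).comp (tendsto_norm_cocompact_atTop (E := ℝ))).congr
      fun a => ?_
    rw [Function.comp_apply, Real.norm_eq_abs, sq_abs]
  have hbound : Tendsto (fun a : ℝ => rexp (1 / 3 + |x|) / a ^ 2) (cocompact ℝ) (𝓝 0) := by
    simpa only [div_eq_mul_inv, mul_zero, Pi.inv_apply] using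
      hsq.inv_tendsto_atTop.const_mul (rexp (1 / 3 + |x|))
  refine squeeze_zero_norm' ?_ hbound
  filter_upwards [hsq.eventually_gt_atTop 0] with a ha
  exact norm_integral_airyKernel_vertical_le x a (by rintro rfl; simp at ha)

theorem integral_airyKernel_eq_add_I_sub_vertical (x B : ℝ) :
    ∫ t in (-B)..B, airyKernel x t =
      (∫ t in (-B)..B, airyKernel x (t + I))
        - I • (∫ u in (0 : ℝ)..1, airyKernel x (B + u * I))
        + I • (∫ u in (0 : ℝ)..1, airyKernel x ((-B : ℝ) + u * I)) := by
  have h := integral_boundary_rect_eq_zero_of_differentiableOn (airyKernel x)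
    ⟨-B, 0⟩ ⟨B, 1⟩ (differentiable_airyKernel x).differentiableOn
  simp only [ofReal_zero, zero_mul, add_zero, ofReal_one, one_mul] at h
  linear_combination h

theorem norm_airyKernel_add_I (x t : ℝ) :
    ‖airyKernel x (t + I)‖ = rexp (1 / 3 - x) * rexp (-1 * t ^ 2) := by
  rw [show (t : ℂ) + I = t + (1 : ℝ) * I by simp, norm_airyKernel, ← Real.exp_add]
  ring_nf

theorem continuous_airyKernel_add_I (x : ℝ) : Continuous fun t : ℝ => airyKernel x (t + I) :=
  (differentiable_airyKernel x).continuous.comp (by fun_prop)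

theorem integrable_airyKernel_add_I (x : ℝ) : Integrable fun t : ℝ => airyKernel x (t + I) := by
  refine ((integrable_exp_neg_mul_sq one_pos).const_mul (rexp (1 / 3 - x))).mono'
    (continuous_airyKernel_add_I x).aestronglyMeasurable (Eventually.of_forall fun t => ?_)
  rw [norm_airyKernel_add_I]

theorem tendsto_integral_airyKernel (x : ℝ) :
    Tendsto (fun B : ℝ => ∫ t in (-B)..B, airyKernel x t) atTop
      (𝓝 (∫ t : ℝ, airyKernel x (t + I))) := by
  have hshift := intervalIntegral_tendsto_integral (integrable_airyKernel_add_I x)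
    tendsto_neg_atTop_atBot tendsto_id
  have hright := (tendsto_integral_airyKernel_vertical x).comp
    (tendsto_id.mono_right atTop_le_cocompact)
  have hleft := (tendsto_integral_airyKernel_vertical x).comp
    (tendsto_neg_atTop_atBot.mono_right atBot_le_cocompact)
  have h := (hshift.sub (hright.const_smul I)).add (hleft.const_smul I)
  rw [smul_zero, sub_zero, add_zero] at h
  exact h.congr fun B => (integral_airyKernel_eq_add_I_sub_vertical x B).symm

theorem norm_integral_airyKernel_add_I_le (x : ℝ) :
    ‖∫ t : ℝ, airyKernel x (t + I)‖ ≤ rexp (1 / 3 - x) * √π :=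
  calc ‖∫ t : ℝ, airyKernel x (t + I)‖
      ≤ ∫ t : ℝ, rexp (1 / 3 - x) * rexp (-1 * t ^ 2) :=
        norm_integral_le_of_norm_le ((integrable_exp_neg_mul_sq one_pos).const_mul _)
          (Eventually.of_forall fun t => (norm_airyKernel_add_I x t).le)
    _ = rexp (1 / 3 - x) * √π := by rw [integral_const_mul, integral_gaussian, div_one]

theorem continuous_integral_airyKernel_add_I :
    Continuous fun x : ℝ => ∫ t : ℝ, airyKernel x (t + I) := by
  refine continuous_iff_continuousAt.2 fun x₀ => continuousAt_of_dominated
    (bound := fun t => rexp (1 / 3 - (x₀ - 1)) * rexp (-1 * t ^ 2))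
    (Eventually.of_forall fun x => (continuous_airyKernel_add_I x).aestronglyMeasurable) ?_
    ((integrable_exp_neg_mul_sq one_pos).const_mul _) (Eventually.of_forall fun t => ?_)
  · filter_upwards [eventually_gt_nhds (sub_one_lt x₀)] with x hx
    refine Eventually.of_forall fun t => ?_
    rw [norm_airyKernel_add_I]
    gcongr
  · unfold airyKernel
    fun_prop

theorem airyKernel_neg_add (x t : ℝ) :
    airyKernel x (-t : ℝ) + airyKernel x t = 2 * Real.cos (t ^ 3 / 3 + t * x) := by
  have h (s : ℝ) : airyKernel x s = cexp (((s ^ 3 / 3 + s * x : ℝ) : ℂ) * I) := by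
    rw [airyKernel]; push_cast; ring_nf
  rw [h, h, exp_mul_I, exp_mul_I, ← ofReal_cos, ← ofReal_sin, ← ofReal_cos, ← ofReal_sin]
  have hphase : (-t) ^ 3 / 3 + -t * x = -(t ^ 3 / 3 + t * x) := by ring
  rw [hphase, Real.cos_neg, Real.sin_neg]
  push_cast
  ring

theorem integral_airyKernel_eq_two_mul_integral_cos (x B : ℝ) :
    ∫ t in (-B)..B, airyKernel x t = 2 * ∫ t in (0 : ℝ)..B, Real.cos (t ^ 3 / 3 + t * x) := by
  have hcont : Continuous fun t : ℝ => airyKernel x t :=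
    (differentiable_airyKernel x).continuous.comp continuous_ofReal
  rw [← intervalIntegral.integral_add_adjacent_intervals (b := 0) (hcont.intervalIntegrable _ _)
      (hcont.intervalIntegrable _ _), ← neg_zero,
    ← intervalIntegral.integral_comp_neg (fun t : ℝ => airyKernel x t), neg_zero,
    ← intervalIntegral.integral_add (f := fun t : ℝ => airyKernel x (-t : ℝ))
      ((hcont.comp continuous_neg).intervalIntegrable _ _) (hcont.intervalIntegrable _ _)]
  simp only [airyKernel_neg_add, intervalIntegral.integral_const_mul,
    intervalIntegral.integral_ofReal]

theorem abs_integral_cos_airyPhase_le_of_le {y a b q : ℝ} (hq : 0 < q) (ha : 0 ≤ a)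
    (hab : a ≤ b) (hgap : ∀ t ∈ Icc a b, q ≤ |t ^ 2 + y|) :
    |∫ t in a..b, Real.cos (t ^ 3 / 3 + t * y)| ≤ 4 / q := by
  have hφ (t : ℝ) : HasDerivAt (fun t => t ^ 3 / 3 + t * y) (t ^ 2 + y) t :=
    (((hasDerivAt_pow 3 t).div_const 3).add ((hasDerivAt_id' t).mul_const y)).congr_deriv
      (by norm_num)
  have hvdc := abs_integral_cos_le_of_deriv_ne_zero (φ' := fun t => t ^ 2 + y)
    (φ'' := fun t => 2 * t) hab (fun t _ => hφ t)
    (fun t _ => by simpa using ((hasDerivAt_pow 2 t).add_const y))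
    (by fun_prop) (fun t ht => by linarith [ht.1])
    (fun t ht => abs_pos.1 (hq.trans_le (hgap t ht)))
  calc _ ≤ 2 * (q⁻¹ + q⁻¹) :=
        hvdc.trans (by gcongr <;> apply hgap <;> simp [hab])
    _ = 4 / q := by ring

theorem abs_integral_cos_airyPhase_le {q B : ℝ} (hq : 1 ≤ q) (hB : q ^ 2 + 1 ≤ B) :
    |∫ t in (0 : ℝ)..B, Real.cos (t ^ 3 / 3 + t * -q ^ 4)| ≤ 10 / q := by
  set δ := q⁻¹
  have hq0 : 0 < q := one_pos.trans_le hq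
  have hδ0 : 0 < δ := inv_pos.2 hq0
  have hδ1 : δ ≤ 1 := inv_le_one_of_one_le₀ hq
  have hqδ : q * δ = 1 := mul_inv_cancel₀ hq0.ne'
  have hδq : δ ≤ q ^ 2 := hδ1.trans (one_le_pow₀ hq)
  have hδB : q ^ 2 + δ ≤ B := by linarith
  have hleft : ∀ t ∈ Icc 0 (q ^ 2 - δ), q ≤ |t ^ 2 + -q ^ 4| := fun t ht => by
    have ht2 : t ^ 2 ≤ (q ^ 2 - δ) ^ 2 := pow_le_pow_left₀ ht.1 ht.2 2
    rw [abs_of_neg (by nlinarith)]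
    nlinarith
  have hright : ∀ t ∈ Icc (q ^ 2 + δ) B, q ≤ |t ^ 2 + -q ^ 4| := fun t ht => by
    have ht2 : (q ^ 2 + δ) ^ 2 ≤ t ^ 2 := pow_le_pow_left₀ (by positivity) ht.1 2
    rw [abs_of_pos (by nlinarith)]
    nlinarith
  have hmid : |∫ t in (q ^ 2 - δ)..(q ^ 2 + δ), Real.cos (t ^ 3 / 3 + t * -q ^ 4)| ≤ 2 / q := by
    have := intervalIntegral.norm_integral_le_of_norm_le_const (a := q ^ 2 - δ) (b := q ^ 2 + δ)
      (C := 1) (f := fun t => Real.cos (t ^ 3 / 3 + t * -q ^ 4))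
      (fun t _ => Real.abs_cos_le_one _)
    rwa [Real.norm_eq_abs, one_mul, show q ^ 2 + δ - (q ^ 2 - δ) = 2 / q by ring,
      abs_of_pos (a := 2 / q) (by positivity)] at this
  have hint (c d : ℝ) :
      IntervalIntegrable (fun t => Real.cos (t ^ 3 / 3 + t * -q ^ 4)) volume c d :=
    (by fun_prop : Continuous fun t : ℝ => Real.cos (t ^ 3 / 3 + t * -q ^ 4)).intervalIntegrable _ _
  rw [← intervalIntegral.integral_add_adjacent_intervals (hint 0 (q ^ 2 - δ)) (hint _ B),
    ← intervalIntegral.integral_add_adjacent_intervals (hint _ (q ^ 2 + δ)) (hint _ B)]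
  calc _ ≤ 4 / q + (2 / q + 4 / q) := (abs_add_le _ _).trans (add_le_add
        (abs_integral_cos_airyPhase_le_of_le hq0 le_rfl (by linarith) hleft)
        ((abs_add_le _ _).trans (add_le_add hmid
          (abs_integral_cos_airyPhase_le_of_le hq0 (by positivity) hδB hright))))
    _ = 10 / q := by ring

theorem norm_one_div_two_pi : ‖(1 / (2 * π) : ℂ)‖ = 1 / (2 * π) := by
  rw [← ofReal_ofNat, ← ofReal_mul, ← ofReal_one, ← ofReal_div, norm_real, Real.norm_eq_abs,
    abs_of_pos (by positivity)]

def IsAiryFunction (Ai : ℝ → ℝ) : Prop :=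
  ∀ x : ℝ, Tendsto (fun B : ℝ => (1 / (2 * π) : ℂ) * ∫ t in (-B)..B, airyKernel x t) atTop
    (𝓝 (Ai x : ℂ))

namespace IsAiryFunction

variable {Ai : ℝ → ℝ}

theorem ofReal_eq (hAi : IsAiryFunction Ai) (x : ℝ) :
    (Ai x : ℂ) = (1 / (2 * π) : ℂ) * ∫ t : ℝ, airyKernel x (t + I) :=
  tendsto_nhds_unique (hAi x) ((tendsto_integral_airyKernel x).const_mul _)

theorem continuous (hAi : IsAiryFunction Ai) : Continuous Ai := by
  have h : Ai = fun x => ((1 / (2 * π) : ℂ) * ∫ t : ℝ, airyKernel x (t + I)).re :=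
    funext fun x => by rw [← hAi.ofReal_eq, ofReal_re]
  rw [h]
  exact continuous_re.comp (continuous_const.mul continuous_integral_airyKernel_add_I)

theorem abs_le_exp_neg (hAi : IsAiryFunction Ai) (x : ℝ) :
    |Ai x| ≤ rexp (1 / 3) * √π / (2 * π) * rexp (-x) := by
  rw [← Real.norm_eq_abs, ← norm_real, hAi.ofReal_eq, norm_mul, norm_one_div_two_pi]
  calc _ ≤ 1 / (2 * π) * (rexp (1 / 3 - x) * √π) := by
        gcongr; exact norm_integral_airyKernel_add_I_le x
    _ = _ := by rw [sub_eq_add_neg, Real.exp_add]; ring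

theorem abs_le_rpow_neg (hAi : IsAiryFunction Ai) {x : ℝ} (hx : x ≤ -1) :
    |Ai x| ≤ 10 / π * (-x) ^ (-(1 / 4) : ℝ) := by
  set q := (-x) ^ (1 / 4 : ℝ) with hq_def
  have hx0 : 0 ≤ -x := by linarith
  have hq1 : 1 ≤ q := Real.one_le_rpow (by linarith) (by norm_num)
  have hxq : x = -q ^ 4 := by
    rw [hq_def, ← Real.rpow_natCast, ← Real.rpow_mul hx0]
    norm_num
  have hqx : (-x) ^ (-(1 / 4) : ℝ) = q⁻¹ := Real.rpow_neg hx0 _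
  rw [hqx, ← Real.norm_eq_abs, ← norm_real]
  refine le_of_tendsto (hAi x).norm (eventually_atTop.2 ⟨q ^ 2 + 1, fun B hB => ?_⟩)
  rw [integral_airyKernel_eq_two_mul_integral_cos, norm_mul, norm_mul, norm_one_div_two_pi,
    norm_real, Real.norm_eq_abs, Complex.norm_two, hxq]
  calc _ ≤ 1 / (2 * π) * (2 * (10 / q)) := by
        gcongr; exact abs_integral_cos_airyPhase_le hq1 hB
    _ = 10 / π * q⁻¹ := by field_simp

end IsAiryFunction

end Airy

/-- There is a constant `C > 0` such that the Airy function
(characterized by `Ai(x) = lim_{B→∞} (1/(2π)) ∫_{-B}^{B} e^{i(t³/3 + tx)} dt`)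
satisfies `∫_0^∞ Ai(x+z)² dx ≤ C e^{-z}` for all `z ≥ 0` and
`∫_0^∞ Ai(x+z)² dx ≤ C (1 + z²)^{1/4}` for all `z ≤ 0` (in particular all these
integrals converge). -/
theorem airy_square_integral_bounds
    (Ai : ℝ → ℝ)
    (hAi : ∀ x : ℝ, Tendsto
      (fun B : ℝ => (1 / (2 * Real.pi) : ℂ) *
        ∫ t in (-B)..B, Complex.exp (Complex.I * ((t : ℂ) ^ 3 / 3 + (t : ℂ) * (x : ℂ))))
      atTop (nhds ((Ai x : ℝ) : ℂ))) :
    ∃ C : ℝ, 0 < C ∧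
      (∀ z : ℝ, IntegrableOn (fun x : ℝ => (Ai (x + z)) ^ 2) (Ioi 0) volume) ∧
      (∀ z : ℝ, 0 ≤ z →
        ∫ x in Ioi (0 : ℝ), (Ai (x + z)) ^ 2 ≤ C * Real.exp (-z)) ∧
      (∀ z : ℝ, z ≤ 0 →
        ∫ x in Ioi (0 : ℝ), (Ai (x + z)) ^ 2 ≤ C * (1 + z ^ 2) ^ ((1 : ℝ) / 4)) := by
  have hAiry : Airy.IsAiryFunction Ai := hAi
  exact exists_integral_sq_comp_add_le hAiry.continuous.measurable (by positivity)
    hAiry.abs_le_exp_neg fun x hx => hAiry.abs_le_rpow_neg hx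
end
end

section
/- Let N ≥ 1 and let φ_0, …, φ_{N−1} : ℝ → ℝ be an orthonormal family in L²(ℝ). Define K_N(x,y) = Σ_{i=0}^{N−1} φ_i(x) φ_i(y) and P_N(x_1,…,x_N) = (1/N!) det( K_N(x_i, x_j) )_{i,j=1}^N. Then for every 1 ≤ n ≤ N and all x_1, …, x_n ∈ ℝ, (N!/(N−n)!) ∫_{ℝ^{N−n}} P_N(x_1,…,x_N) dx_{n+1} ⋯ dx_N = det( K_N(x_i, x_j) )_{i,j=1}^n. -/
/-!
Writing `Φ = (φ_k(z_s))`, the kernel matrix is `Φ Φᵀ`, so its determinant is `(det Φ)²`, a double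
sum over permutations `σ, τ` of the `N` points. The integral over the last `N - n` points
factorises, and orthonormality keeps exactly the pairs with `σ = τ` on those points, i.e.
`σ = τ ∘ (π ⊕ 1)` with `π` a permutation of the first `n` points. Summing over `π` gives
`det(A_f) ∏_a A_{a, f a}` with `A = (φ_k(x_a))` and `f = τ|_{first n}`, which depends only on the
injection `f`; every injection arises from `(N - n)!` permutations `τ`, and the sum over all `f` is
the Cauchy–Binet expansion of `det(A Aᵀ)`.
-/

open MeasureTheory Finset

namespace Equiv.Perm

variable {ι ι' : Type*}

lemma exists_sumCongr_one_eq_of_forall_apply_inl [Finite ι] [Finite ι'] {ρ : Perm (ι ⊕ ι')}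
    (h : ∀ a, ρ (Sum.inl a) = Sum.inl a) : ∃ π : Perm ι', sumCongr 1 π = ρ := by
  obtain ⟨⟨π₁, π₂⟩, hπ⟩ := mem_sumCongrHom_range_of_perm_mapsTo_inl (σ := ρ)
    (by rintro _ ⟨a, rfl⟩; exact ⟨a, (h a).symm⟩)
  obtain rfl : π₁ = 1 := by
    ext a
    simpa [← hπ] using h a
  exact ⟨π₂, hπ⟩

lemma exists_sumCongr_one_eq_of_forall_apply_inr [Finite ι] [Finite ι'] {ρ : Perm (ι ⊕ ι')}
    (h : ∀ b, ρ (Sum.inr b) = Sum.inr b) : ∃ π : Perm ι, sumCongr π 1 = ρ := by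
  obtain ⟨⟨π₁, π₂⟩, hπ⟩ := mem_sumCongrHom_range_of_perm_mapsTo_inl (σ := ρ)
    ((perm_mapsTo_inl_iff_mapsTo_inr ρ).mpr (by rintro _ ⟨b, rfl⟩; exact ⟨b, (h b).symm⟩))
  obtain rfl : π₂ = 1 := by
    ext b
    simpa [← hπ] using h b
  exact ⟨π₁, hπ⟩

variable [Fintype ι] [Fintype ι'] [DecidableEq ι] [DecidableEq ι'] {M : Type*} [AddCommMonoid M]

lemma sum_filter_forall_apply_inl_eq (τ : Perm (ι ⊕ ι')) (G : Perm (ι ⊕ ι') → M) :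
    ∑ σ with ∀ a, σ (Sum.inl a) = τ (Sum.inl a), G σ = ∑ π : Perm ι', G (τ * sumCongr 1 π) := by
  symm
  refine Finset.sum_nbij (fun π ↦ τ * sumCongr 1 π) (by simp) ?_ ?_ (fun _ _ ↦ rfl)
  · intro π₁ _ π₂ _ h
    ext b
    simpa using congrArg (fun σ ↦ (τ⁻¹ * σ) (Sum.inr b)) h
  · intro σ hσ
    obtain ⟨π, hπ⟩ := exists_sumCongr_one_eq_of_forall_apply_inl (ρ := τ⁻¹ * σ)
      (by simp_all)
    exact ⟨π, Finset.mem_coe.2 (Finset.mem_univ _), by simp [hπ]⟩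

lemma sum_filter_forall_apply_inr_eq (τ : Perm (ι ⊕ ι')) (G : Perm (ι ⊕ ι') → M) :
    ∑ σ with ∀ b, σ (Sum.inr b) = τ (Sum.inr b), G σ = ∑ π : Perm ι, G (τ * sumCongr π 1) := by
  symm
  refine Finset.sum_nbij (fun π ↦ τ * sumCongr π 1) (by simp) ?_ ?_ (fun _ _ ↦ rfl)
  · intro π₁ _ π₂ _ h
    ext a
    simpa using congrArg (fun σ ↦ (τ⁻¹ * σ) (Sum.inl a)) h
  · intro σ hσ
    obtain ⟨π, hπ⟩ := exists_sumCongr_one_eq_of_forall_apply_inr (ρ := τ⁻¹ * σ)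
      (by simp_all)
    exact ⟨π, Finset.mem_coe.2 (Finset.mem_univ _), by simp [hπ]⟩

lemma card_filter_comp_inl_eq {f : ι → ι ⊕ ι'} (hf : Function.Injective f) :
    #{σ : Perm (ι ⊕ ι') | ⇑σ ∘ Sum.inl = f} = (Fintype.card ι').factorial := by
  obtain ⟨τ, hτ⟩ := exists_extending_pair Sum.inl f Sum.inl_injective hf
  have hfiber (σ : Perm (ι ⊕ ι')) : ⇑σ ∘ Sum.inl = f ↔ ∀ a, σ (Sum.inl a) = τ (Sum.inl a) := by
    simp [funext_iff, hτ]
  rw [Finset.filter_congr fun σ _ ↦ hfiber σ, Finset.card_eq_sum_ones,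
    sum_filter_forall_apply_inl_eq]
  simp [Fintype.card_perm]

lemma sum_comp_inl_eq_factorial_smul_sum (F : (ι → ι ⊕ ι') → M)
    (hF : ∀ f, ¬ Function.Injective f → F f = 0) :
    ∑ σ : Perm (ι ⊕ ι'), F (⇑σ ∘ Sum.inl) = (Fintype.card ι').factorial • ∑ f, F f := by
  rw [← Finset.sum_fiberwise' Finset.univ (fun σ : Perm (ι ⊕ ι') ↦ ⇑σ ∘ Sum.inl), Finset.smul_sum]
  refine Fintype.sum_congr _ _ fun f ↦ ?_
  by_cases hf : Function.Injective f
  · rw [Finset.sum_const, card_filter_comp_inl_eq hf]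
  · simp [hF f hf]

end Equiv.Perm

open Equiv Equiv.Perm

namespace Matrix

variable {R : Type*} [CommRing R] {ι ι' S : Type*} [Fintype ι] [DecidableEq ι] [Fintype S]

lemma det_mul_eq_sum_det_submatrix_mul_prod (A : Matrix ι S R) (B : Matrix S ι R) :
    (A * B).det = ∑ f : ι → S, (A.submatrix id f).det * ∏ i, B (f i) i := by
  simp only [det_apply', mul_apply, prod_univ_sum, mul_sum, Fintype.piFinset_univ,
    submatrix_apply, id]
  rw [sum_comm]
  refine Fintype.sum_congr _ _ fun f ↦ ?_
  rw [sum_mul]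
  refine Fintype.sum_congr _ _ fun σ ↦ ?_
  rw [prod_mul_distrib, mul_assoc]

lemma det_mul_transpose_self [DecidableEq S] (M : Matrix S S R) :
    (M * Mᵀ).det = ∑ σ : Perm S, ∑ τ : Perm S,
      ((sign σ : ℤ) : R) * (sign τ : ℤ) * ∏ s, M s (σ s) * M s (τ s) := by
  rw [det_mul, det_transpose, ← det_transpose M, det_apply', sum_mul_sum]
  refine Fintype.sum_congr _ _ fun σ ↦ Fintype.sum_congr _ _ fun τ ↦ ?_
  simp only [transpose_apply, prod_mul_distrib]
  ring

lemma sum_sum_perm_eqOn_inr [Fintype ι'] [DecidableEq ι'] (A : Matrix ι (ι ⊕ ι') R) :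
    ∑ σ : Perm (ι ⊕ ι'), ∑ τ : Perm (ι ⊕ ι'),
      (if ∀ b, σ (Sum.inr b) = τ (Sum.inr b) then
        ((sign σ : ℤ) : R) * (sign τ : ℤ) * ∏ a, A a (σ (Sum.inl a)) * A a (τ (Sum.inl a))
      else 0) = (Fintype.card ι').factorial * (A * Aᵀ).det := by
  rw [det_mul_eq_sum_det_submatrix_mul_prod, ← nsmul_eq_mul,
    ← sum_comp_inl_eq_factorial_smul_sum fun f ↦ (A.submatrix id f).det * ∏ a, Aᵀ (f a) a,
    sum_comm]
  · refine Fintype.sum_congr _ _ fun τ ↦ ?_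
    rw [← sum_filter, sum_filter_forall_apply_inr_eq, ← det_transpose, det_apply', sum_mul]
    refine Fintype.sum_congr _ _ fun π ↦ ?_
    have hsq : ((sign τ : ℤ) : R) * (sign τ : ℤ) = 1 := by
      rw [← Int.cast_mul, ← Units.val_mul, Int.units_mul_self, Units.val_one, Int.cast_one]
    simp only [Perm.sign_mul, sign_sumCongr, Perm.sign_one, mul_one, Units.val_mul, Int.cast_mul,
      prod_mul_distrib, Perm.mul_apply, Perm.sumCongr_apply, Sum.map_inl, transpose_apply,
      submatrix_apply, id, Function.comp_apply]
    rw [mul_right_comm _ _ ((sign τ : ℤ) : R), hsq, one_mul, mul_assoc]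
  · intro f hf
    obtain ⟨a, a', hfa, hne⟩ := Function.not_injective_iff.mp hf
    rw [det_zero_of_column_eq hne (fun i ↦ by simp [hfa]), zero_mul]

end Matrix

section Orthonormal

variable {κ ι' : Type*} [Fintype ι'] {φ : κ → ℝ → ℝ}

lemma integrable_prod_mul (hφ : ∀ k, MemLp (φ k) 2) (u v : ι' → κ) :
    Integrable fun y : ι' → ℝ ↦ ∏ b, φ (u b) (y b) * φ (v b) (y b) :=
  Integrable.fintype_prod fun b ↦ (hφ (u b)).integrable_mul (hφ (v b))

lemma integral_prod_mul_of_orthonormal [DecidableEq κ]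
    (horth : ∀ i j, ∫ t, φ i t * φ j t = if i = j then 1 else 0) (u v : ι' → κ) :
    ∫ y : ι' → ℝ, ∏ b, φ (u b) (y b) * φ (v b) (y b) = if u = v then 1 else 0 := by
  rw [integral_fintype_prod_volume_eq_prod fun b t ↦ φ (u b) t * φ (v b) t]
  simp_rw [horth]
  rw [Finset.prod_boole]
  simp [funext_iff]

end Orthonormal

section Kernel

open Matrix

variable {κ ι ι' : Type*} [Fintype κ]

def kernelMatrix (φ : κ → ℝ → ℝ) (z : ι → ℝ) : Matrix ι ι ℝ :=
  of fun i j ↦ ∑ k, φ k (z i) * φ k (z j)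

lemma kernelMatrix_eq_mul_transpose (φ : κ → ℝ → ℝ) (z : ι → ℝ) :
    kernelMatrix φ z = of (fun i k ↦ φ k (z i)) * (of fun i k ↦ φ k (z i))ᵀ := by
  ext i j
  simp [kernelMatrix, Matrix.mul_apply]

lemma kernelMatrix_submatrix (φ : κ → ℝ → ℝ) (z : ι → ℝ) (f : ι' → ι) :
    (kernelMatrix φ z).submatrix f f = kernelMatrix φ (z ∘ f) :=
  rfl

lemma kernelMatrix_comp_equiv {κ' : Type*} [Fintype κ'] (φ : κ → ℝ → ℝ) (e : κ' ≃ κ)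
    (z : ι → ℝ) : kernelMatrix (φ ∘ e) z = kernelMatrix φ z := by
  ext i j
  exact e.sum_comp fun k ↦ φ k (z i) * φ k (z j)

theorem integral_det_kernelMatrix_sum_elim [Fintype ι] [DecidableEq ι] [Fintype ι']
    [DecidableEq ι'] [DecidableEq κ] {φ : κ → ℝ → ℝ} (hφ : ∀ k, MemLp (φ k) 2)
    (horth : ∀ i j, ∫ t, φ i t * φ j t = if i = j then 1 else 0)
    (hcard : Fintype.card ι + Fintype.card ι' = Fintype.card κ) (x : ι → ℝ) :
    ∫ y : ι' → ℝ, (kernelMatrix φ (Sum.elim x y)).det =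
      (Fintype.card ι').factorial * (kernelMatrix φ x).det := by
  obtain ⟨e⟩ : Nonempty (ι ⊕ ι' ≃ κ) := ⟨Fintype.equivOfCardEq (by simp [hcard])⟩
  simp_rw [← kernelMatrix_comp_equiv φ e]
  set ψ := φ ∘ e
  have hψ (k : ι ⊕ ι') : MemLp (ψ k) 2 := hφ (e k)
  have hψorth (k l : ι ⊕ ι') : ∫ t, ψ k t * ψ l t = if k = l then 1 else 0 := by
    simp [ψ, horth, e.injective.eq_iff]
  set A : Matrix ι (ι ⊕ ι') ℝ := of fun a k ↦ ψ k (x a)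
  set c : Perm (ι ⊕ ι') → Perm (ι ⊕ ι') → ℝ := fun σ τ ↦
    ((sign σ : ℤ) : ℝ) * (sign τ : ℤ) * ∏ a, A a (σ (Sum.inl a)) * A a (τ (Sum.inl a))
  have hexpand (y : ι' → ℝ) : (kernelMatrix ψ (Sum.elim x y)).det = ∑ σ, ∑ τ,
      c σ τ * ∏ b, ψ (σ (Sum.inr b)) (y b) * ψ (τ (Sum.inr b)) (y b) := by
    rw [kernelMatrix_eq_mul_transpose, det_mul_transpose_self]
    simp only [Fintype.prod_sum_type, c, A, of_apply, Sum.elim_inl, Sum.elim_inr, mul_assoc]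
  calc ∫ y : ι' → ℝ, (kernelMatrix ψ (Sum.elim x y)).det
      = ∑ σ, ∑ τ, c σ τ * ∫ y : ι' → ℝ,
          ∏ b, ψ (σ (Sum.inr b)) (y b) * ψ (τ (Sum.inr b)) (y b) := by
        simp_rw [hexpand]
        rw [integral_finsetSum _ fun σ _ ↦ integrable_finsetSum _ fun τ _ ↦
          (integrable_prod_mul hψ _ _).const_mul _]
        refine Fintype.sum_congr _ _ fun σ ↦ ?_
        rw [integral_finsetSum _ fun τ _ ↦ (integrable_prod_mul hψ _ _).const_mul _]
        simp_rw [integral_const_mul]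
    _ = ∑ σ, ∑ τ, if ∀ b, σ (Sum.inr b) = τ (Sum.inr b) then c σ τ else 0 := by
        simp_rw [integral_prod_mul_of_orthonormal hψorth, funext_iff,
          mul_ite, mul_one, mul_zero]
    _ = (Fintype.card ι').factorial * (A * Aᵀ).det := sum_sum_perm_eqOn_inr A
    _ = (Fintype.card ι').factorial * (kernelMatrix ψ x).det := by
        rw [kernelMatrix_eq_mul_transpose]

end Kernel

/-- Let `N ≥ 1` and let `φ_0, …, φ_{N−1} : ℝ → ℝ` be an orthonormal
family in `L²(ℝ)`.  Define `K_N(x,y) = Σ_{i<N} φ_i(x) φ_i(y)` and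
`P_N(x_1,…,x_N) = (1/N!) det(K_N(x_i,x_j))`.  Then for every `1 ≤ n ≤ N` and all
`x_1, …, x_n ∈ ℝ`,
`(N!/(N−n)!) ∫_{ℝ^{N−n}} P_N(x_1,…,x_N) dx_{n+1} ⋯ dx_N = det(K_N(x_i,x_j))_{i,j≤n}`. -/
theorem correlation_function_identity
    (N n : ℕ) (hnN : n ≤ N)
    (φ : Fin N → ℝ → ℝ)
    (hφ : ∀ i, MemLp (φ i) 2 (volume : Measure ℝ))
    (horth : ∀ i j, ∫ t : ℝ, φ i t * φ j t = if i = j then (1 : ℝ) else 0)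
    (x : Fin n → ℝ) :
    ((N.factorial : ℝ) / ((N - n).factorial : ℝ)) *
      ∫ y : Fin (N - n) → ℝ,
        ((1 : ℝ) / (N.factorial : ℝ)) *
          Matrix.det (Matrix.of fun i j : Fin N =>
            ∑ k : Fin N,
              φ k (Fin.append x y (Fin.cast (by omega) i)) *
              φ k (Fin.append x y (Fin.cast (by omega) j)))
    = Matrix.det (Matrix.of fun i j : Fin n =>
        ∑ k : Fin N, φ k (x i) * φ k (x j)) := by
  show _ = (kernelMatrix φ x).det
  have hN : N = n + (N - n) := by omega
  have hdet (y : Fin (N - n) → ℝ) : Matrix.det (Matrix.of fun i j : Fin N =>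
      ∑ k : Fin N, φ k (Fin.append x y (Fin.cast hN i)) * φ k (Fin.append x y (Fin.cast hN j))) =
        (kernelMatrix φ (Sum.elim x y)).det := by
    calc _ = ((kernelMatrix φ (Fin.append x y)).submatrix (finCongr hN) (finCongr hN)).det := rfl
      _ = ((kernelMatrix φ (Fin.append x y)).submatrix finSumFinEquiv finSumFinEquiv).det := by
        rw [Matrix.det_submatrix_equiv_self, Matrix.det_submatrix_equiv_self]
      _ = (kernelMatrix φ (Sum.elim x y)).det := by
        rw [kernelMatrix_submatrix, ← Fin.append_comp_sumElim]
        rfl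
  simp_rw [hdet]
  have hcard : Fintype.card (Fin n) + Fintype.card (Fin (N - n)) = Fintype.card (Fin N) := by
    simp only [Fintype.card_fin]
    omega
  rw [integral_const_mul, integral_det_kernelMatrix_sum_elim hφ horth hcard, Fintype.card_fin]
  have hN_fact : (N.factorial : ℝ) ≠ 0 := by positivity
  have hNn_fact : ((N - n).factorial : ℝ) ≠ 0 := by positivity
  field_simp
end

section
/- Let N ≥ 1, let φ_0, …, φ_{N−1} : ℝ → ℝ be an orthonormal family in L²(ℝ), set K_N(x,y) = Σ_{i=0}^{N−1} φ_i(x) φ_i(y) and P_N(x_1,…,x_N) = (1/N!) det( K_N(x_i, x_j) )_{i,j=1}^N. Then for every bounded measurable g : ℝ → ℂ, ∫_{ℝ^N} ∏_{i=1}^N (1 + g(x_i)) · P_N(x_1,…,x_N) dx_1 ⋯ dx_N = det( I_N + M ), where M is the N×N matrix with entries M_{ij} = ∫_ℝ g(x) φ_i(x) φ_j(x) dx for 0 ≤ i, j ≤ N−1. -/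
/-!
Writing `A = (φ_k(x_i))_{i,k}`, the kernel matrix is `A Aᵀ`, so `∏ (1 + g(x_i)) · det K` is
`det A' · det A` with `A'` the matrix `A` whose `i`-th row is scaled by `1 + g(x_i)`.
Expanding both determinants over permutations and integrating term by term, Fubini factors every
term into one-dimensional integrals `∫ (1 + g) φ_j φ_k = δ_{jk} + M_{jk}`, and the double sum over
permutations collapses to `N! · det (I + M)`.
-/

open MeasureTheory Complex Filter Set Matrix Equiv

theorem Matrix.sum_perm_sum_perm_sign_mul_prod {ι R : Type*} [Fintype ι] [DecidableEq ι]
    [CommRing R] (G : Matrix ι ι R) :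
    ∑ σ : Perm ι, ∑ τ : Perm ι,
        ((Perm.sign σ : ℤ) : R) * ((Perm.sign τ : ℤ) : R) * ∏ i, G (σ i) (τ i)
      = (Fintype.card ι).factorial * G.det := by
  have inner (σ : Perm ι) : ∑ τ : Perm ι, ((Perm.sign τ : ℤ) : R) * ∏ i, G (σ i) (τ i)
      = (Perm.sign σ : ℤ) * G.det := by
    rw [← det_permute, ← det_transpose, det_apply']
    rfl
  simp_rw [mul_assoc, ← Finset.mul_sum, inner, ← mul_assoc, ← Int.cast_mul, ← Units.val_mul,
    Int.units_mul_self, Units.val_one, Int.cast_one, one_mul, Finset.sum_const, Finset.card_univ,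
    Fintype.card_perm, nsmul_eq_mul]

theorem Matrix.det_of_apply_eq_sum_perm {ι α R : Type*} [Fintype ι] [DecidableEq ι] [CommRing R]
    (f : ι → α → R) (x : ι → α) :
    (of fun i k => f k (x i)).det = ∑ σ : Perm ι, ((Perm.sign σ : ℤ) : R) * ∏ i, f (σ i) (x i) := by
  rw [← det_transpose, det_apply']
  rfl

/-- Andréief's identity. -/
theorem integral_det_mul_det {ι α 𝕜 : Type*} [Fintype ι] [DecidableEq ι] [RCLike 𝕜]
    [MeasurableSpace α] (μ : Measure α) [SigmaFinite μ] (f h : ι → α → 𝕜)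
    (hfh : ∀ j k, Integrable (fun t => f j t * h k t) μ) :
    ∫ x : ι → α, (of fun i k => f k (x i)).det * (of fun i k => h k (x i)).det
        ∂(Measure.pi fun _ => μ)
      = ((Fintype.card ι).factorial : 𝕜) * (of fun j k => ∫ t, f j t * h k t ∂μ).det := by
  have expand (x : ι → α) : (of fun i k => f k (x i)).det * (of fun i k => h k (x i)).det
      = ∑ σ : Perm ι, ∑ τ : Perm ι, ((Perm.sign σ : ℤ) : 𝕜) * ((Perm.sign τ : ℤ) : 𝕜) *
          ∏ i, f (σ i) (x i) * h (τ i) (x i) := by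
    simp_rw [det_of_apply_eq_sum_perm, Finset.sum_mul_sum, Finset.prod_mul_distrib]
    exact Finset.sum_congr rfl fun σ _ => Finset.sum_congr rfl fun τ _ => by ring
  have integrable (σ τ : Perm ι) :
      Integrable (fun x : ι → α => ∏ i, f (σ i) (x i) * h (τ i) (x i)) (Measure.pi fun _ => μ) :=
    Integrable.fintype_prod fun i => hfh (σ i) (τ i)
  simp_rw [expand]
  rw [integral_finsetSum _ fun σ _ => integrable_finsetSum _ fun τ _ =>
    (integrable σ τ).const_mul _]
  simp_rw [integral_finsetSum _ fun τ _ => (integrable _ τ).const_mul _, integral_const_mul]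
  rw [← sum_perm_sum_perm_sign_mul_prod]
  refine Finset.sum_congr rfl fun σ _ => Finset.sum_congr rfl fun τ _ => ?_
  rw [integral_fintype_prod_eq_prod (fun i t => f (σ i) t * h (τ i) t)]
  rfl

theorem prod_mul_ofReal_det_gram_eq {ι α : Type*} [Fintype ι] [DecidableEq ι] (φ : ι → α → ℝ)
    (w : α → ℂ) (x : ι → α) :
    (∏ i, w (x i)) * ((of fun i j => ∑ k, φ k (x i) * φ k (x j)).det : ℂ)
      = (of fun i k => w (x i) * φ k (x i)).det * (of fun i k => (φ k (x i) : ℂ)).det := by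
  set A : Matrix ι ι ℂ := of fun i k => (φ k (x i) : ℂ)
  have gram : ((of fun i j => ∑ k, φ k (x i) * φ k (x j)).det : ℂ) = (A * Aᵀ).det := by
    rw [← ofRealHom_eq_coe, RingHom.map_det]
    congr 1
    ext i j
    simp [A, mul_apply]
  rw [gram, det_mul, det_transpose, ← mul_assoc, ← det_mul_column]
  rfl

section SquareIntegrable

variable {α : Type*} [MeasurableSpace α] {μ : Measure α} {w : α → ℂ} {C : ℝ} {u v : α → ℝ}

theorem integrable_mul_ofReal_mul_ofReal (hw : AEStronglyMeasurable w μ) (hwC : ∀ t, ‖w t‖ ≤ C)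
    (hu : MemLp u 2 μ) (hv : MemLp v 2 μ) :
    Integrable (fun t => w t * u t * v t) μ := by
  have huv : Integrable (fun t => ((u t * v t : ℝ) : ℂ)) μ := (hu.integrable_mul hv).ofReal
  simpa only [mul_assoc, ofReal_mul] using
    huv.bdd_mul hw (c := C) (Eventually.of_forall hwC)

theorem integral_one_add_mul_ofReal_mul_ofReal (hw : AEStronglyMeasurable w μ)
    (hwC : ∀ t, ‖w t‖ ≤ C) (hu : MemLp u 2 μ) (hv : MemLp v 2 μ) :
    ∫ t, (1 + w t) * u t * v t ∂μ = ((∫ t, u t * v t ∂μ : ℝ) : ℂ) + ∫ t, w t * u t * v t ∂μ := by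
  have split : (fun t => (1 + w t) * u t * v t)
      = fun t => ((u t * v t : ℝ) : ℂ) + w t * u t * v t := by
    ext t
    push_cast
    ring
  have huv : Integrable (fun t => ((u t * v t : ℝ) : ℂ)) μ := (hu.integrable_mul hv).ofReal
  rw [split, integral_add huv (integrable_mul_ofReal_mul_ofReal hw hwC hu hv),
    integral_complex_ofReal]

end SquareIntegrable

theorem expectation_product_eq_det_general
    (N : ℕ)
    (φ : Fin N → ℝ → ℝ)
    (hφ : ∀ i, MemLp (φ i) 2 (volume : Measure ℝ))
    (horth : ∀ i j, ∫ t : ℝ, φ i t * φ j t = if i = j then (1 : ℝ) else 0)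
    (g : ℝ → ℂ) (hgmeas : Measurable g) (C : ℝ) (hgbdd : ∀ t : ℝ, ‖g t‖ ≤ C) :
    ∫ x : Fin N → ℝ,
        (∏ i : Fin N, (1 + g (x i))) *
          ((((1 : ℝ) / (N.factorial : ℝ)) *
            Matrix.det (Matrix.of fun i j : Fin N =>
              ∑ k : Fin N, φ k (x i) * φ k (x j)) : ℝ) : ℂ)
    = Matrix.det ((1 : Matrix (Fin N) (Fin N) ℂ) +
        Matrix.of fun i j : Fin N => ∫ t : ℝ, g t * (φ i t : ℂ) * (φ j t : ℂ)) := by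
  set M : Matrix (Fin N) (Fin N) ℂ := of fun i j => ∫ t : ℝ, g t * (φ i t : ℂ) * (φ j t : ℂ)
  have hg₁ : ∀ t, ‖1 + g t‖ ≤ 1 + C := fun t => (norm_add_le _ _).trans (by simp [hgbdd t])
  have hg₁meas : AEStronglyMeasurable (fun t => 1 + g t) volume :=
    (measurable_const.add hgmeas).aestronglyMeasurable
  have integrable (j k : Fin N) : Integrable (fun t => (1 + g t) * φ j t * φ k t) :=
    integrable_mul_ofReal_mul_ofReal hg₁meas hg₁ (hφ j) (hφ k)
  have entry (j k : Fin N) : ∫ t, (1 + g t) * φ j t * φ k t = (1 + M) j k := by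
    rw [integral_one_add_mul_ofReal_mul_ofReal hgmeas.aestronglyMeasurable hgbdd (hφ j) (hφ k),
      horth, Matrix.add_apply, one_apply]
    split_ifs <;> simp [M]
  calc _ = ∫ x : Fin N → ℝ, (N.factorial : ℂ)⁻¹ *
          ((of fun i k => (1 + g (x i)) * φ k (x i)).det *
            (of fun i k => (φ k (x i) : ℂ)).det) := by
        congr 1 with x
        rw [← prod_mul_ofReal_det_gram_eq φ (fun t => 1 + g t) x]
        push_cast
        ring
    _ = (N.factorial : ℂ)⁻¹ *
          (N.factorial * (of fun j k => ∫ t, (1 + g t) * φ j t * φ k t).det) := by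
        rw [integral_const_mul, volume_pi, integral_det_mul_det volume
          (fun k t => (1 + g t) * φ k t) (fun k t => (φ k t : ℂ)) integrable, Fintype.card_fin]
    _ = (1 + M).det := by
        rw [inv_mul_cancel_left₀ (by exact_mod_cast N.factorial_ne_zero)]
        congr 1 with j k
        exact entry j k

/-- Let `N ≥ 1`, let `φ_0, …, φ_{N−1} : ℝ → ℝ` be an orthonormal
family in `L²(ℝ)`, `K_N(x,y) = Σ_{i<N} φ_i(x) φ_i(y)` and
`P_N(x_1,…,x_N) = (1/N!) det(K_N(x_i,x_j))`.  Then for every bounded measurable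
`g : ℝ → ℂ`,
`∫_{ℝ^N} ∏_i (1 + g(x_i)) · P_N(x) dx = det(I_N + M)` where
`M_{ij} = ∫ g(x) φ_i(x) φ_j(x) dx`. -/
theorem expectation_product_eq_det
    (N : ℕ) (hN : 1 ≤ N)
    (φ : Fin N → ℝ → ℝ)
    (hφ : ∀ i, MemLp (φ i) 2 (volume : Measure ℝ))
    (horth : ∀ i j, ∫ t : ℝ, φ i t * φ j t = if i = j then (1 : ℝ) else 0)
    (g : ℝ → ℂ) (hgmeas : Measurable g) (C : ℝ) (hgbdd : ∀ t : ℝ, ‖g t‖ ≤ C) :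
    ∫ x : Fin N → ℝ,
        (∏ i : Fin N, (1 + g (x i))) *
          ((((1 : ℝ) / (N.factorial : ℝ)) *
            Matrix.det (Matrix.of fun i j : Fin N =>
              ∑ k : Fin N, φ k (x i) * φ k (x j)) : ℝ) : ℂ)
    = Matrix.det ((1 : Matrix (Fin N) (Fin N) ℂ) +
        Matrix.of fun i j : Fin N => ∫ t : ℝ, g t * (φ i t : ℂ) * (φ j t : ℂ)) :=
  expectation_product_eq_det_general N φ hφ horth g hgmeas C hgbdd
end
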